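/- arXiv:1305.0404 — 10 statements merged into one kernel-verified Lean document; each statement's English description precedes it below -/
import Mathlib

section
/- For every p > 1, the constant c_p = (1/(2π)) · (Γ((p+1)/(p-1))/Γ(2p/(p-1))) · (Γ(2p/(p-1))/Γ((5p-1)/(2p-2)))^{(p+3)/(p-1)} · (Γ((3p+1)/(2p-2))/Γ((p+1)/(p-1)))^{(3p+1)/(p-1)} satisfies c_p ≥ 1/(2πe). -/
open Real

noncomputable section

/-- The sharp constant `c_p` from Proposition 2. -/
def cP (p : ℝ) : ℝ :=
  (1 / (2 * Real.pi)) * (Real.Gamma ((p + 1) / (p - 1)) / Real.Gamma (2 * p / (p - 1))) *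
    (Real.Gamma (2 * p / (p - 1)) / Real.Gamma ((5 * p - 1) / (2 * p - 2))) ^ ((p + 3) / (p - 1)) *
    (Real.Gamma ((3 * p + 1) / (2 * p - 2)) / Real.Gamma ((p + 1) / (p - 1))) ^ ((3 * p + 1) / (p - 1))

/-!
Put `x = 2 / (p - 1)`. Then
`2π c_p = (x + 1)⁻¹ (Γ(x + 2) / Γ(x + 5/2))^(2x + 1) (Γ(x + 3/2) / Γ(x + 1))^(2x + 3)`,
and the bound `e⁻¹` is sharp as `x → ∞`, so the half-step ratios of `Γ` have to be
controlled to second order: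
`(s + 1/4) Γ(s + 1/2)² ≤ Γ(s + 1)² ≤ exp (1 / (16 (s + 1/4)²)) (s + 1/4) Γ(s + 1/2)²`.
The logarithm `D s` of `Γ(s + 1)² / ((s + 1/4) Γ(s + 1/2)²)` satisfies
`D s - D (s + 1) = log (1 + 1 / (16 (s + 1)² (s + 1/4)))` by the functional equation, and
`D s → 0` by log-convexity of `Γ`; telescoping along `s + ℕ` gives both bounds. Taking
`s = x + 1/2` and `s = x + 3/2` leaves an elementary inequality between logarithms, which follows
from `log r ≤ z - z⁻¹` for `r ≤ z²`, `z ≥ 1`.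
-/

open Filter Topology

theorem le_of_le_add_one_of_tendsto {f u : ℝ → ℝ} {s L : ℝ}
    (hstep : ∀ t ≥ s, f t ≤ f (t + 1)) (hle : ∀ t ≥ s, f t ≤ u t)
    (hu : Tendsto u atTop (𝓝 L)) : f s ≤ L := by
  have hmono : Monotone fun n : ℕ => f (s + n) := monotone_nat_of_le_succ fun n => by
    simpa [add_assoc] using hstep (s + n) (by simp)
  have hshift : Tendsto (fun n : ℕ => s + n) atTop atTop :=
    tendsto_atTop_add_const_left _ _ tendsto_natCast_atTop_atTop
  refine ge_of_tendsto' (hu.comp hshift) fun n => ?_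
  calc f s = f (s + (0 : ℕ)) := by simp
    _ ≤ f (s + n) := hmono n.zero_le
    _ ≤ u (s + n) := hle _ (by simp)

theorem log_Gamma_add_one {s : ℝ} (hs : 0 < s) : log (Gamma (s + 1)) = log s + log (Gamma s) := by
  rw [Gamma_add_one hs.ne', log_mul hs.ne' (Gamma_pos_of_pos hs).ne']

theorem two_mul_log_Gamma_midpoint_le {a b : ℝ} (ha : 0 < a) (hb : 0 < b) :
    2 * log (Gamma ((a + b) / 2)) ≤ log (Gamma a) + log (Gamma b) := by
  have h := convexOn_log_Gamma.2 (Set.mem_Ioi.2 ha) (Set.mem_Ioi.2 hb)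
    (by norm_num : (0 : ℝ) ≤ 1 / 2) (by norm_num : (0 : ℝ) ≤ 1 / 2) (by norm_num)
  simp only [Function.comp, smul_eq_mul] at h
  rw [show 1 / 2 * a + 1 / 2 * b = (a + b) / 2 by ring] at h
  linarith

def gammaHalfDefect (s : ℝ) : ℝ :=
  2 * log (Gamma (s + 1)) - 2 * log (Gamma (s + 1 / 2)) - log (s + 1 / 4)

theorem gammaHalfDefect_sub_succ {s : ℝ} (hs : 0 < s) :
    gammaHalfDefect s - gammaHalfDefect (s + 1) =
      log (1 + 1 / (16 * (s + 1) ^ 2 * (s + 1 / 4))) := by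
  have hfrac : 1 + 1 / (16 * (s + 1) ^ 2 * (s + 1 / 4)) =
      (s + 1 / 2) ^ 2 * (s + 5 / 4) / ((s + 1) ^ 2 * (s + 1 / 4)) := by
    field_simp; ring
  rw [hfrac, gammaHalfDefect, gammaHalfDefect, log_Gamma_add_one (by positivity : 0 < s + 1),
    show s + 1 + 1 / 2 = s + 1 / 2 + 1 by ring, log_Gamma_add_one (by positivity : 0 < s + 1 / 2),
    log_div (by positivity) (by positivity), log_mul (by positivity) (by positivity),
    log_mul (by positivity) (by positivity), log_pow, log_pow]
  push_cast; ring_nf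

theorem gammaHalfDefect_succ_le {s : ℝ} (hs : 0 < s) :
    gammaHalfDefect (s + 1) ≤ gammaHalfDefect s := by
  have h := gammaHalfDefect_sub_succ hs
  have : 0 ≤ log (1 + 1 / (16 * (s + 1) ^ 2 * (s + 1 / 4))) := log_nonneg (by simp; positivity)
  linarith

theorem gammaHalfDefect_le_succ_add {s : ℝ} (hs : 0 < s) :
    gammaHalfDefect s ≤ gammaHalfDefect (s + 1) + 1 / (16 * (s + 1) ^ 2 * (s + 1 / 4)) := by
  have h := gammaHalfDefect_sub_succ hs
  have := log_le_sub_one_of_pos (by positivity : 0 < 1 + 1 / (16 * (s + 1) ^ 2 * (s + 1 / 4)))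
  linarith

theorem log_sub_log_le_gammaHalfDefect {s : ℝ} (hs : 0 < s) :
    log s - log (s + 1 / 4) ≤ gammaHalfDefect s := by
  have h := two_mul_log_Gamma_midpoint_le hs (by positivity : 0 < s + 1)
  rw [show (s + (s + 1)) / 2 = s + 1 / 2 by ring] at h
  have := log_Gamma_add_one hs
  unfold gammaHalfDefect
  linarith

theorem gammaHalfDefect_le_log_sub_log {s : ℝ} (hs : 0 < s) :
    gammaHalfDefect s ≤ log (s + 1 / 2) - log (s + 1 / 4) := by
  have h := two_mul_log_Gamma_midpoint_le (by positivity : 0 < s + 1 / 2)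
    (by positivity : 0 < s + 3 / 2)
  rw [show (s + 1 / 2 + (s + 3 / 2)) / 2 = s + 1 by ring,
    show s + 3 / 2 = s + 1 / 2 + 1 by ring,
    log_Gamma_add_one (s := s + 1 / 2) (by positivity)] at h
  unfold gammaHalfDefect
  linarith

theorem gammaHalfDefect_nonneg {s : ℝ} (hs : 0 < s) : 0 ≤ gammaHalfDefect s := by
  have h := le_of_le_add_one_of_tendsto (f := fun t => -gammaHalfDefect t) (s := s)
    (fun t ht => neg_le_neg (gammaHalfDefect_succ_le (hs.trans_le ht)))
    (fun t ht => neg_le.2 (by simpa using log_sub_log_le_gammaHalfDefect (hs.trans_le ht)))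
    (tendsto_log_comp_add_sub_log (1 / 4))
  simpa using h

theorem gammaHalfDefect_le {s : ℝ} (hs : 0 < s) :
    gammaHalfDefect s ≤ 1 / (16 * (s + 1 / 4) ^ 2) := by
  have htail : ∀ t : ℝ, 0 < t → 1 / (16 * (t + 1) ^ 2 * (t + 1 / 4)) ≤
      1 / (16 * (t + 1 / 4) ^ 2) - 1 / (16 * (t + 1 + 1 / 4) ^ 2) := by
    intro t ht
    rw [div_sub_div _ _ (by positivity) (by positivity),
      div_le_div_iff₀ (by positivity) (by positivity)]
    nlinarith [pow_pos ht 2, pow_pos ht 3, pow_pos ht 4, pow_pos ht 5]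
  have h := le_of_le_add_one_of_tendsto
    (f := fun t => gammaHalfDefect t - 1 / (16 * (t + 1 / 4) ^ 2)) (s := s)
    (fun t ht => by
      have := gammaHalfDefect_le_succ_add (hs.trans_le ht)
      have := htail t (hs.trans_le ht)
      linarith)
    (fun t ht => by
      have ht' := hs.trans_le ht
      have := gammaHalfDefect_le_log_sub_log ht'
      have := log_le_log ht' (by linarith : t ≤ t + 1 / 4)
      have : 0 ≤ 1 / (16 * (t + 1 / 4) ^ 2) := by positivity
      linarith)
    (tendsto_log_comp_add_sub_log (1 / 2))
  linarith

theorem two_mul_log_le_sub_inv {z : ℝ} (hz : 1 ≤ z) : 2 * log z ≤ z - z⁻¹ := by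
  have h := self_le_sinh_iff.2 (log_nonneg hz)
  rw [sinh_eq, exp_log (by linarith), exp_neg, exp_log (by linarith)] at h
  linarith

theorem log_le_sub_inv_of_le_sq {r z : ℝ} (hr : 0 < r) (hz : 1 ≤ z) (hrz : r ≤ z ^ 2) :
    log r ≤ z - z⁻¹ :=
  calc log r ≤ log (z ^ 2) := log_le_log hr hrz
    _ = 2 * log z := by rw [log_pow]; norm_num
    _ ≤ z - z⁻¹ := two_mul_log_le_sub_inv hz

theorem log_add_one_add_mul_log_le {x : ℝ} (hx : 0 < x) :
    log (x + 1) + (x + 1 / 2) * log (x + 7 / 4) + 1 / (16 * (x + 7 / 4))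
      ≤ 1 + (x + 3 / 2) * log (x + 3 / 4) := by
  -- `z` is a rational approximation from above of `√((x + 7/4) / (x + 3/4))`
  have hgap : log (x + 7 / 4) - log (x + 3 / 4) ≤
      (x + 19 / 16) / ((x + 15 / 16) * (x + 23 / 16)) := by
    set z := (x + 23 / 16) / (x + 15 / 16) with hz_def
    have hz : 1 ≤ z := by rw [le_div_iff₀ (by positivity)]; linarith
    have hsq : (x + 7 / 4) / (x + 3 / 4) ≤ z ^ 2 := by
      rw [div_pow, div_le_div_iff₀ (by positivity) (by positivity)]
      nlinarith
    have hz' : z - z⁻¹ = (x + 19 / 16) / ((x + 15 / 16) * (x + 23 / 16)) := by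
      rw [hz_def]; field_simp; ring
    rw [← log_div (by positivity) (by positivity), ← hz']
    exact log_le_sub_inv_of_le_sq (by positivity) hz hsq
  have hstep : 3 / (4 * (x + 7 / 4)) ≤ log (x + 7 / 4) - log (x + 1) := by
    have h := log_le_sub_one_of_pos (by positivity : 0 < (x + 1) / (x + 7 / 4))
    rw [log_div (by positivity) (by positivity)] at h
    have : (x + 1) / (x + 7 / 4) - 1 = -(3 / (4 * (x + 7 / 4))) := by field_simp; ring
    linarith
  have hrat : (x + 3 / 2) * ((x + 19 / 16) / ((x + 15 / 16) * (x + 23 / 16)))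
      ≤ 1 + 11 / (16 * (x + 7 / 4)) := by
    rw [mul_div_assoc', one_add_div (by positivity),
      div_le_div_iff₀ (by positivity) (by positivity)]
    nlinarith
  have hmul := mul_le_mul_of_nonneg_left hgap (by positivity : 0 ≤ x + 3 / 2)
  have : 1 / (16 * (x + 7 / 4)) + 11 / (16 * (x + 7 / 4)) = 3 / (4 * (x + 7 / 4)) := by
    field_simp; ring
  linarith

def gammaProduct (x : ℝ) : ℝ :=
  (x + 1)⁻¹ * (Gamma (x + 2) / Gamma (x + 5 / 2)) ^ (2 * x + 1) *
    (Gamma (x + 3 / 2) / Gamma (x + 1)) ^ (2 * x + 3)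

theorem log_gammaProduct {x : ℝ} (hx : 0 < x) :
    log (gammaProduct x) = -log (x + 1)
      - (2 * x + 1) * (log (Gamma (x + 5 / 2)) - log (Gamma (x + 2)))
      + (2 * x + 3) * (log (Gamma (x + 3 / 2)) - log (Gamma (x + 1))) := by
  have hA : 0 < Gamma (x + 2) / Gamma (x + 5 / 2) := by positivity
  have hB : 0 < Gamma (x + 3 / 2) / Gamma (x + 1) := by positivity
  rw [gammaProduct, log_mul (by positivity) (by positivity),
    log_mul (by positivity) (by positivity), log_inv, log_rpow hA, log_rpow hB,
    log_div (by positivity) (by positivity), log_div (by positivity) (by positivity)]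
  ring

theorem neg_one_le_log_gammaProduct {x : ℝ} (hx : 0 < x) : -1 ≤ log (gammaProduct x) := by
  have hlow := gammaHalfDefect_nonneg (s := x + 1 / 2) (by positivity)
  have hup := gammaHalfDefect_le (s := x + 3 / 2) (by positivity)
  rw [gammaHalfDefect, show x + 1 / 2 + 1 = x + 3 / 2 by ring,
    show x + 1 / 2 + 1 / 2 = x + 1 by ring, show x + 1 / 2 + 1 / 4 = x + 3 / 4 by ring] at hlow
  rw [gammaHalfDefect, show x + 3 / 2 + 1 = x + 5 / 2 by ring,
    show x + 3 / 2 + 1 / 2 = x + 2 by ring, show x + 3 / 2 + 1 / 4 = x + 7 / 4 by ring] at hup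
  have hcorr : (2 * x + 1) * (1 / (16 * (x + 7 / 4) ^ 2)) ≤ 2 * (1 / (16 * (x + 7 / 4))) := by
    rw [mul_one_div, mul_one_div, div_le_div_iff₀ (by positivity) (by positivity)]
    nlinarith
  have hlow' := mul_le_mul_of_nonneg_left hlow (by positivity : 0 ≤ 2 * x + 3)
  have hup' := mul_le_mul_of_nonneg_left hup (by positivity : 0 ≤ 2 * x + 1)
  have helem := log_add_one_add_mul_log_le hx
  rw [log_gammaProduct hx]
  linarith

theorem cP_eq_gammaProduct {p : ℝ} (hp : 1 < p) :
    cP p = gammaProduct (2 / (p - 1)) / (2 * π) := by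
  have hp1 : p - 1 ≠ 0 := by linarith
  set x := 2 / (p - 1) with hx
  have hx0 : 0 < x := div_pos two_pos (by linarith)
  have e1 : (p + 1) / (p - 1) = x + 1 := by rw [hx]; field_simp; ring
  have e2 : 2 * p / (p - 1) = x + 2 := by rw [hx]; field_simp; ring
  have e3 : (5 * p - 1) / (2 * p - 2) = x + 5 / 2 := by rw [hx]; field_simp; ring
  have e4 : (3 * p + 1) / (2 * p - 2) = x + 3 / 2 := by rw [hx]; field_simp; ring
  have e5 : (p + 3) / (p - 1) = 2 * x + 1 := by rw [hx]; field_simp; ring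
  have e6 : (3 * p + 1) / (p - 1) = 2 * x + 3 := by rw [hx]; field_simp; ring
  have hratio : Gamma (x + 1) / Gamma (x + 2) = (x + 1)⁻¹ := by
    have := (Gamma_pos_of_pos (by positivity : 0 < x + 1)).ne'
    rw [show x + 2 = x + 1 + 1 by ring, Gamma_add_one (s := x + 1) (by positivity)]
    field_simp
  rw [cP, gammaProduct, e1, e2, e3, e4, e5, e6, hratio]
  ring

theorem gammaProduct_pos {x : ℝ} (hx : 0 < x) : 0 < gammaProduct x := by
  unfold gammaProduct
  positivity

theorem cP_ge (p : ℝ) (hp : 1 < p) :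
    cP p ≥ 1 / (2 * Real.pi * Real.exp 1) := by
  have hx : 0 < 2 / (p - 1) := div_pos two_pos (by linarith)
  have hG : exp (-1) ≤ gammaProduct (2 / (p - 1)) :=
    (le_log_iff_exp_le (gammaProduct_pos hx)).1 (neg_one_le_log_gammaProduct hx)
  calc 1 / (2 * π * exp 1) = exp (-1) / (2 * π) := by rw [exp_neg]; field_simp
    _ ≤ gammaProduct (2 / (p - 1)) / (2 * π) := by gcongr
    _ = cP p := (cP_eq_gammaProduct hp).symm
end
end

section
/- Let p > 1 and let u : ℝ → ℝ be defined by u(x) = (1-x²)^{1/(p-1)} for |x| ≤ 1 and u(x) = 0 otherwise. Then equality holds in the weighted inequality: (∫_ℝ u(x)² x² dx) · (∫_ℝ |u(x)|^{p+1} dx)^{4/(p-1)} = c_p · (∫_ℝ u(x)² dx)^{(3p+1)/(p-1)}, where c_p = (1/(2π)) · (Γ((p+1)/(p-1))/Γ(2p/(p-1))) · (Γ(2p/(p-1))/Γ((5p-1)/(2p-2)))^{(p+3)/(p-1)} · (Γ((3p+1)/(2p-2))/Γ((p+1)/(p-1)))^{(3p+1)/(p-1)}. -/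
open MeasureTheory Real

noncomputable section

lemma realBeta {a b : ℝ} (ha : 0 < a) (hb : 0 < b) :
    ∫ x in Set.Ioo (0:ℝ) 1, x ^ (a - 1) * (1 - x) ^ (b - 1) =
      Real.Gamma a * Real.Gamma b / Real.Gamma (a + b) := by
  have h := Complex.Gamma_mul_Gamma_eq_betaIntegral (s := (a:ℂ)) (t := (b:ℂ))
    (by simpa using ha) (by simpa using hb)
  have hbeta : Complex.betaIntegral a b =
      ((∫ x in (0:ℝ)..1, x ^ (a - 1) * (1 - x) ^ (b - 1) : ℝ) : ℂ) := by
    rw [Complex.betaIntegral, ← intervalIntegral.integral_ofReal]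
    apply intervalIntegral.integral_congr
    intro x hx
    rw [Set.uIcc_of_le (by norm_num)] at hx
    push_cast
    rw [Complex.ofReal_cpow hx.1, Complex.ofReal_cpow (by linarith [hx.2])]
    push_cast
    ring
  rw [hbeta] at h
  have h2 : ∫ x in (0:ℝ)..1, x ^ (a - 1) * (1 - x) ^ (b - 1) =
      ∫ x in Set.Ioo (0:ℝ) 1, x ^ (a - 1) * (1 - x) ^ (b - 1) := by
    rw [intervalIntegral.integral_of_le (by norm_num), ← integral_Ioc_eq_integral_Ioo]
  have hG : Complex.Gamma (a + b) ≠ 0 :=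
    Complex.Gamma_ne_zero_of_re_pos (by simpa using by positivity)
  have hGr : Real.Gamma (a + b) ≠ 0 := (Real.Gamma_pos_of_pos (by positivity)).ne'
  rw [← h2]
  rw [← Complex.ofReal_add, Complex.Gamma_ofReal, Complex.Gamma_ofReal, Complex.Gamma_ofReal,
    ← Complex.ofReal_mul, ← Complex.ofReal_mul] at h
  have h3 := Complex.ofReal_injective h
  field_simp
  linarith [h3]

lemma key (s : ℝ) (hs : 0 < s) (m : ℕ) :
    ∫ x : ℝ, (if |x| ≤ 1 then (1 - x ^ 2) ^ s else 0) * x ^ (2 * m)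
      = Real.Gamma ((m : ℝ) + 1 / 2) * Real.Gamma (s + 1) /
          Real.Gamma ((m : ℝ) + 1 / 2 + (s + 1)) := by
  set f : ℝ → ℝ := fun x => (if |x| ≤ 1 then (1 - x ^ 2) ^ s else 0) * x ^ (2 * m) with hf
  set h : ℝ → ℝ := fun x => (1 - x ^ 2) ^ s * x ^ (2 * m) with hh
  have hcont : Continuous h := by
    apply Continuous.mul _ (continuous_pow _)
    exact (by continuity : Continuous fun x : ℝ => 1 - x ^ 2).rpow_const
      (fun x => Or.inr hs.le)
  -- step A : restrict to Ioo (-1) 1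
  have hA : ∫ x : ℝ, f x = ∫ x in Set.Ioo (-1:ℝ) 1, f x := by
    refine (setIntegral_eq_integral_of_forall_compl_eq_zero fun x hx => ?_).symm
    simp only [Set.mem_Ioo, not_and_or, not_lt] at hx
    have h1 : 1 ≤ |x| := by
      rcases hx with hx | hx
      · rw [abs_of_nonpos (by linarith)]; linarith
      · rw [abs_of_nonneg (by linarith)]; linarith
    rcases eq_or_lt_of_le h1 with heq | hlt
    · have hx2 : x ^ 2 = 1 := by rw [← sq_abs, ← heq, one_pow]
      have hc : |x| ≤ 1 := le_of_eq heq.symm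
      simp [f, hc, hx2, Real.zero_rpow hs.ne']
    · simp [f, not_le.2 hlt]
  -- step B : on Ioo (-1) 1, f = h
  have hB : ∫ x in Set.Ioo (-1:ℝ) 1, f x = ∫ x in Set.Ioo (-1:ℝ) 1, h x := by
    refine setIntegral_congr_fun measurableSet_Ioo fun x hx => ?_
    have : |x| ≤ 1 := abs_le.2 ⟨hx.1.le, hx.2.le⟩
    simp [f, h, this]
  -- integrability
  have hint : ∀ t : Set ℝ, t ⊆ Set.Icc (-1:ℝ) 1 → IntegrableOn h t := fun t ht =>
    (hcont.integrableOn_Icc).mono_set ht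
  -- step D : evenness
  have heven : ∫ x in Set.Ioo (-1:ℝ) 0, h x = ∫ x in Set.Ioo (0:ℝ) 1, h x := by
    have himg : Neg.neg '' Set.Ioo (0:ℝ) 1 = Set.Ioo (-1:ℝ) 0 := by
      rw [Set.image_neg_Ioo]; norm_num
    rw [← himg, integral_image_eq_integral_abs_deriv_smul measurableSet_Ioo
      (fun x _ => (hasDerivAt_neg x).hasDerivWithinAt) (fun a _ b _ hab => neg_injective hab)]
    refine setIntegral_congr_fun measurableSet_Ioo fun x hx => ?_
    simp only [smul_eq_mul, abs_neg, abs_one]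
    have : (-x) ^ (2 * m) = x ^ (2 * m) := (even_two_mul m).neg_pow x
    simp [h, this]
  have hsplit : ∫ x in Set.Ioo (-1:ℝ) 1, h x = 2 * ∫ x in Set.Ioo (0:ℝ) 1, h x := by
    have hdisj : Disjoint (Set.Ioo (-1:ℝ) 0) (Set.Ico 0 1) := by
      refine Set.disjoint_left.2 ?_
      rintro x ⟨_, h2⟩ ⟨h3, _⟩
      linarith
    rw [← Set.Ioo_union_Ico_eq_Ioo (by norm_num : (-1:ℝ) < 0) (by norm_num : (0:ℝ) ≤ 1),
      setIntegral_union hdisj measurableSet_Ico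
        (hint _ (fun x hx => ⟨hx.1.le, by linarith [hx.2.le]⟩))
        (hint _ (fun x hx => ⟨by linarith [hx.1], hx.2.le⟩)),
      integral_Ico_eq_integral_Ioo, heven]
    ring
  -- step E : substitution t = x ^ 2
  have hsub : ∫ t in Set.Ioo (0:ℝ) 1, t ^ ((m : ℝ) + 1 / 2 - 1) * (1 - t) ^ (s + 1 - 1)
      = 2 * ∫ x in Set.Ioo (0:ℝ) 1, h x := by
    have himg : (fun x : ℝ => x ^ 2) '' Set.Ioo (0:ℝ) 1 = Set.Ioo (0:ℝ) 1 := by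
      ext t
      simp only [Set.mem_image, Set.mem_Ioo]
      constructor
      · rintro ⟨x, hx, rfl⟩
        exact ⟨pow_pos hx.1 2, by nlinarith [hx.1, hx.2]⟩
      · rintro ht
        refine ⟨Real.sqrt t, ⟨Real.sqrt_pos.2 ht.1, ?_⟩, Real.sq_sqrt ht.1.le⟩
        rw [show (1:ℝ) = Real.sqrt 1 by simp]
        exact Real.sqrt_lt_sqrt ht.1.le ht.2
    conv_lhs => rw [← himg]
    rw [integral_image_eq_integral_abs_deriv_smul measurableSet_Ioo
      (fun x _ => (hasDerivAt_pow 2 x).hasDerivWithinAt)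
      (fun a ha b hb hab => by nlinarith [ha.1, hb.1, ha.2, hb.2])]
    rw [show (2:ℝ) * ∫ x in Set.Ioo (0:ℝ) 1, h x = ∫ x in Set.Ioo (0:ℝ) 1, 2 * h x from
      (integral_const_mul 2 h).symm]
    refine setIntegral_congr_fun measurableSet_Ioo fun x hx => ?_
    have hx0 : 0 < x := hx.1
    have habs : |((2:ℕ):ℝ) * x ^ (2 - 1)| = 2 * x := by
      rw [abs_of_nonneg (by positivity)]; norm_num
    have hpow : ((x:ℝ) ^ 2) ^ ((m : ℝ) + 1 / 2 - 1)
        = x ^ (((2:ℕ):ℝ) * ((m:ℝ) + 1/2 - 1)) := by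
      rw [← Real.rpow_natCast x 2, ← Real.rpow_mul hx0.le]
    have hxx : x * x ^ (((2:ℕ):ℝ) * ((m : ℝ) + 1 / 2 - 1)) = x ^ (2 * m) := by
      rw [show ((2:ℕ):ℝ) * ((m:ℝ) + 1/2 - 1) = ((2*m : ℕ) : ℝ) - 1 by push_cast; ring,
        Real.rpow_sub hx0, Real.rpow_natCast, Real.rpow_one]
      field_simp
    show |((2:ℕ):ℝ) * x ^ (2 - 1)| • ((x ^ 2) ^ ((m : ℝ) + 1 / 2 - 1)
        * (1 - x ^ 2) ^ (s + 1 - 1)) = 2 * h x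
    rw [smul_eq_mul, habs, hpow]
    simp only [h, hh]
    rw [show s + 1 - 1 = s by ring]
    linear_combination 2 * (1 - x ^ 2) ^ s * hxx
  have hBeta := realBeta (a := (m : ℝ) + 1 / 2) (b := s + 1) (by positivity) (by linarith)
  rw [hA, hB, hsplit, ← hsub, hBeta]

lemma gamma_three_half : Real.Gamma (((1:ℕ):ℝ) + 1 / 2) = Real.sqrt π / 2 := by
  rw [show ((1:ℕ):ℝ) + 1 / 2 = 1 / 2 + 1 by norm_num, Real.Gamma_add_one (by norm_num),
    Real.Gamma_one_half_eq]
  ring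

lemma alg (p A B C D : ℝ) (hp : 1 < p) (hA : 0 < A) (hB : 0 < B) (hC : 0 < C) (hD : 0 < D) :
    (Real.sqrt π / 2 * A / D) * (Real.sqrt π * B / D) ^ ((4:ℝ)/(p-1))
      = ((1 / (2 * π)) * (A / B) * (B / D) ^ ((p+3)/(p-1)) * (C / A) ^ ((3*p+1)/(p-1)))
        * (Real.sqrt π * A / C) ^ ((3*p+1)/(p-1)) := by
  have hπ := Real.pi_pos
  have hs : 0 < Real.sqrt π := Real.sqrt_pos.2 hπ
  have hne : p - 1 ≠ 0 := by linarith
  apply Real.log_injOn_pos (Set.mem_Ioi.2 (by positivity)) (Set.mem_Ioi.2 (by positivity))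
  have l1 : Real.log (Real.sqrt π / 2 * A / D)
      = Real.log π / 2 - Real.log 2 + Real.log A - Real.log D := by
    rw [Real.log_div (by positivity) (by positivity), Real.log_mul (by positivity) (by positivity),
      Real.log_div (by positivity) (by positivity), Real.log_sqrt Real.pi_pos.le]
  have l2 : Real.log (Real.sqrt π * B / D)
      = Real.log π / 2 + Real.log B - Real.log D := by
    rw [Real.log_div (by positivity) (by positivity), Real.log_mul (by positivity) (by positivity),
      Real.log_sqrt Real.pi_pos.le]
  have l3 : Real.log (Real.sqrt π * A / C)
      = Real.log π / 2 + Real.log A - Real.log C := by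
    rw [Real.log_div (by positivity) (by positivity), Real.log_mul (by positivity) (by positivity),
      Real.log_sqrt Real.pi_pos.le]
  have l4 : Real.log ((1 / (2 * π)) * (A / B) * (B / D) ^ ((p+3)/(p-1)) * (C / A) ^ ((3*p+1)/(p-1)))
      = -(Real.log 2 + Real.log π) + (Real.log A - Real.log B)
        + ((p+3)/(p-1)) * (Real.log B - Real.log D)
        + ((3*p+1)/(p-1)) * (Real.log C - Real.log A) := by
    rw [Real.log_mul (by positivity) (by positivity), Real.log_mul (by positivity) (by positivity),
      Real.log_mul (by positivity) (by positivity), Real.log_rpow (by positivity),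
      Real.log_rpow (by positivity), Real.log_div hB.ne' hD.ne', Real.log_div hC.ne' hA.ne',
      Real.log_div hA.ne' hB.ne', Real.log_div one_ne_zero (by positivity), Real.log_one,
      Real.log_mul two_ne_zero hπ.ne']
    ring
  rw [Real.log_mul (by positivity) (by positivity), Real.log_rpow (by positivity),
    Real.log_mul (by positivity) (by positivity), Real.log_rpow (by positivity), l1, l2, l3, l4]
  field_simp
  ring

theorem extremizer_equality (p : ℝ) (hp : 1 < p)
    (u : ℝ → ℝ)
    (hu : u = fun x : ℝ => if |x| ≤ 1 then (1 - x ^ 2) ^ ((1 : ℝ) / (p - 1)) else 0) :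
    (∫ x : ℝ, (u x) ^ 2 * x ^ 2) * (∫ x : ℝ, |u x| ^ (p + 1)) ^ ((4 : ℝ) / (p - 1)) =
      cP p * (∫ x : ℝ, (u x) ^ 2) ^ ((3 * p + 1) / (p - 1)) := by
  have hne : p - 1 ≠ 0 := by linarith
  have hne2 : 2 * p - 2 ≠ 0 := by linarith
  have hp1 : (0:ℝ) < p - 1 := by linarith
  have hux : ∀ x : ℝ, |x| ≤ 1 → (0:ℝ) ≤ 1 - x ^ 2 := fun x hx => by
    nlinarith [sq_abs x, abs_nonneg x]
  set A := Real.Gamma ((p + 1) / (p - 1)) with hAdef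
  set B := Real.Gamma (2 * p / (p - 1)) with hBdef
  set C := Real.Gamma ((3 * p + 1) / (2 * p - 2)) with hCdef
  set D := Real.Gamma ((5 * p - 1) / (2 * p - 2)) with hDdef
  have hA : 0 < A := Real.Gamma_pos_of_pos (div_pos (by linarith) (by linarith))
  have hB : 0 < B := Real.Gamma_pos_of_pos (div_pos (by linarith) (by linarith))
  have hC : 0 < C := Real.Gamma_pos_of_pos (div_pos (by linarith) (by linarith))
  have hD : 0 < D := Real.Gamma_pos_of_pos (div_pos (by linarith) (by linarith))
  -- the unweighted L² integral
  have e2 : (∫ x : ℝ, (u x) ^ 2) = Real.sqrt π * A / C := by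
    have hfun : (fun x : ℝ => (u x) ^ 2)
        = fun x => (if |x| ≤ 1 then (1 - x ^ 2) ^ (2 / (p - 1)) else 0) * x ^ (2 * 0) := by
      funext x
      rw [hu]
      by_cases hx : |x| ≤ 1
      · simp only [hx, if_true, pow_zero, mul_one]
        rw [← Real.rpow_natCast ((1 - x ^ 2) ^ ((1:ℝ)/(p-1))) 2,
          ← Real.rpow_mul (hux x hx),
          show (1:ℝ)/(p-1) * ((2:ℕ):ℝ) = 2/(p-1) by push_cast; ring]
        norm_num
      · simp [hx]
    rw [hfun, key (2 / (p - 1)) (div_pos two_pos hp1) 0]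
    have g1 : Real.Gamma (((0:ℕ):ℝ) + 1 / 2) = Real.sqrt π := by
      norm_num [Real.Gamma_one_half_eq]
    have g2 : Real.Gamma (2 / (p - 1) + 1) = A := by
      rw [hAdef]; congr 1; field_simp; ring
    have g3 : Real.Gamma (((0:ℕ):ℝ) + 1 / 2 + (2 / (p - 1) + 1)) = C := by
      rw [hCdef]; congr 1; field_simp; ring
    rw [g1, g2, g3]
  -- the weighted integral
  have ex : (∫ x : ℝ, (u x) ^ 2 * x ^ 2) = Real.sqrt π / 2 * A / D := by
    have hfun : (fun x : ℝ => (u x) ^ 2 * x ^ 2)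
        = fun x => (if |x| ≤ 1 then (1 - x ^ 2) ^ (2 / (p - 1)) else 0) * x ^ (2 * 1) := by
      funext x
      rw [hu]
      by_cases hx : |x| ≤ 1
      · simp only [hx, if_true, mul_one]
        rw [← Real.rpow_natCast ((1 - x ^ 2) ^ ((1:ℝ)/(p-1))) 2,
          ← Real.rpow_mul (hux x hx),
          show (1:ℝ)/(p-1) * ((2:ℕ):ℝ) = 2/(p-1) by push_cast; ring]
      · simp [hx]
    rw [hfun, key (2 / (p - 1)) (div_pos two_pos hp1) 1]
    have g2 : Real.Gamma (2 / (p - 1) + 1) = A := by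
      rw [hAdef]; congr 1; field_simp; ring
    have g3 : Real.Gamma (((1:ℕ):ℝ) + 1 / 2 + (2 / (p - 1) + 1)) = D := by
      rw [hDdef]; congr 1; field_simp; ring
    rw [gamma_three_half, g2, g3]
  -- the L^{p+1} integral
  have ep : (∫ x : ℝ, |u x| ^ (p + 1)) = Real.sqrt π * B / D := by
    have hfun : (fun x : ℝ => |u x| ^ (p + 1))
        = fun x => (if |x| ≤ 1 then (1 - x ^ 2) ^ ((p + 1) / (p - 1)) else 0) * x ^ (2 * 0) := by
      funext x
      rw [hu]
      by_cases hx : |x| ≤ 1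
      · simp only [hx, if_true, pow_zero, mul_one]
        rw [abs_of_nonneg (Real.rpow_nonneg (hux x hx) _),
          ← Real.rpow_mul (hux x hx),
          show (1:ℝ)/(p-1) * (p + 1) = (p+1)/(p-1) by ring]
        norm_num
      · simp [hx, Real.zero_rpow (show p + 1 ≠ 0 by linarith)]
    rw [hfun, key ((p + 1) / (p - 1)) (div_pos (by linarith) hp1) 0]
    have g1 : Real.Gamma (((0:ℕ):ℝ) + 1 / 2) = Real.sqrt π := by
      norm_num [Real.Gamma_one_half_eq]
    have g2 : Real.Gamma ((p + 1) / (p - 1) + 1) = B := by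
      rw [hBdef]; congr 1; field_simp; ring
    have g3 : Real.Gamma (((0:ℕ):ℝ) + 1 / 2 + ((p + 1) / (p - 1) + 1)) = D := by
      rw [hDdef]; congr 1; field_simp; ring
    rw [g1, g2, g3]
  rw [e2, ex, ep]
  show _ = cP p * _
  rw [cP.eq_1]
  exact alg p A B C D hp hA hB hC hD
end
end

section
/- Let p > 1, let α, β, δ > 0 and γ ∈ ℝ, and let f : ℝ → ℝ be continuously differentiable with f(x) > δ for all x ≥ 0. Assume that for all x ≥ 0, f'(x) ≥ α · ∫₀ˣ f(y)^{(1-p)/2} dy - β·√(f(x)) - γ. Then there exists a constant C (depending only on α, β, γ, δ and p) such that for every z > 0, the Lebesgue measure of the set {x > 0 : f(x) ≤ z} is at most C · z^{p/2}. -/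
/-!
Let `S = {f ≤ z}` and `u x = |S ∩ (0, x]|`. Since `f ≤ z` on `S`,
`∫₀ˣ f^((1-p)/2) ≥ z^((1-p)/2) u x`, so once `u x` reaches `m = C₀ z^(p/2)`, for a suitable
`C₀ = C₀(α, β, γ, δ, p)`, the differential inequality gives `f' ≥ K = z^(1-p/2)` at every point
of `S`. A function whose derivative is positive wherever `f ≤ z` never returns to `{f ≤ z}` after
leaving it, so past the point `x₀` with `u x₀ = m` the set `S` is an interval on which `f` climbs
at rate `K` from a value `≥ 0` to at most `z`. Its length is at most `z / K = z^(p/2)`, and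
`|S ∩ (0, ∞)| ≤ m + z / K = (C₀ + 1) z^(p/2)`.
-/

open MeasureTheory Real Set Filter Topology
open scoped ENNReal

theorem inter_Ioc_subset_union (s : Set ℝ) (a b c : ℝ) :
    s ∩ Ioc a c ⊆ s ∩ Ioc a b ∪ s ∩ Ioc b c :=
  (inter_subset_inter_right s Ioc_subset_Ioc_union_Ioc).trans (inter_union_distrib_left _ _ _).subset

theorem measure_inter_Ioc_ne_top (s : Set ℝ) (a b : ℝ) : volume (s ∩ Ioc a b) ≠ ∞ :=
  ((measure_mono inter_subset_right).trans_lt measure_Ioc_lt_top).ne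

theorem lipschitzWith_one_volume_real_inter_Ioc (s : Set ℝ) (a : ℝ) :
    LipschitzWith 1 fun x => volume.real (s ∩ Ioc a x) := by
  refine LipschitzWith.of_le_add fun x y => ?_
  calc volume.real (s ∩ Ioc a x) ≤ volume.real (s ∩ Ioc a y ∪ Ioc y x) :=
        measureReal_mono ((inter_Ioc_subset_union s a y x).trans
          (union_subset_union_right _ inter_subset_right))
          (measure_union_ne_top (measure_inter_Ioc_ne_top s a y) measure_Ioc_lt_top.ne)
    _ ≤ volume.real (s ∩ Ioc a y) + volume.real (Ioc y x) := measureReal_union_le _ _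
    _ ≤ volume.real (s ∩ Ioc a y) + dist x y := by
        rw [Real.volume_real_Ioc, Real.dist_eq]
        gcongr
        exact max_le (le_abs_self _) (abs_nonneg _)

theorem mul_volume_real_sublevel_le_integral_rpow {f : ℝ → ℝ} (hf : Continuous f) {a x q z : ℝ}
    (hax : a ≤ x) (hq : q ≤ 0) (hpos : ∀ y ∈ Icc a x, 0 < f y) :
    z ^ q * volume.real ({y | f y ≤ z} ∩ Ioc a x) ≤ ∫ y in a..x, f y ^ q := by
  have hint : IntegrableOn (fun y => f y ^ q) (Ioc a x) :=
    ((hf.continuousOn.rpow_const fun y hy => Or.inl (hpos y hy).ne').integrableOn_Icc).mono_set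
      Ioc_subset_Icc_self
  rw [intervalIntegral.integral_of_le hax]
  calc z ^ q * volume.real ({y | f y ≤ z} ∩ Ioc a x)
      ≤ ∫ y in {y | f y ≤ z} ∩ Ioc a x, f y ^ q :=
        setIntegral_ge_of_const_le_real
          ((measurableSet_le hf.measurable measurable_const).inter measurableSet_Ioc)
          (measure_inter_Ioc_ne_top _ a x)
          (fun y hy => rpow_le_rpow_of_nonpos (hpos y (Ioc_subset_Icc_self hy.2)) hy.1 hq)
          (hint.mono_set inter_subset_right)
    _ ≤ ∫ y in Ioc a x, f y ^ q :=
        setIntegral_mono_set hint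
          ((ae_restrict_mem measurableSet_Ioc).mono fun y hy =>
            rpow_nonneg (hpos y (Ioc_subset_Icc_self hy)).le q)
          inter_subset_right.eventuallyLE

theorem forall_Icc_le_of_deriv_pos_on_sublevel {f : ℝ → ℝ} (hf : Differentiable ℝ f) {a y z : ℝ}
    (hpos : ∀ x ∈ Icc a y, f x ≤ z → 0 < deriv f x) (hy : f y ≤ z) :
    ∀ x ∈ Icc a y, f x ≤ z := by
  intro x hx
  by_contra! hxz
  set T := Icc x y ∩ {w | f w ≤ z}
  have hT_bdd : BddBelow T := ⟨x, fun w hw => hw.1.1⟩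
  have htT : sInf T ∈ T :=
    (isClosed_Icc.inter (isClosed_le hf.continuous continuous_const)).csInf_mem
      ⟨y, ⟨hx.2, le_rfl⟩, hy⟩ hT_bdd
  set t := sInf T
  -- `t` is the first point of `[x, y]` back in `{f ≤ z}`; `f' t > 0` forces `f < f t ≤ z` just
  -- left of `t`, where `f > z`.
  have hxt : x < t := htT.1.1.lt_of_ne fun h => hxz.not_ge (h ▸ htT.2)
  have habove : ∀ s ∈ Ico x t, z < f s := fun s hs => by
    by_contra! hsz
    exact hs.2.not_ge (csInf_le hT_bdd ⟨⟨hs.1, hs.2.le.trans htT.1.2⟩, hsz⟩)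
  have hslope : Tendsto (slope f t) (𝓝[<] t) (𝓝 (deriv f t)) :=
    (hasDerivAt_iff_tendsto_slope.1 (hf t).hasDerivAt).mono_left (nhdsLT_le_nhdsNE t)
  obtain ⟨s, hs_slope, hs⟩ := ((hslope.eventually (eventually_gt_nhds
    (hpos t ⟨hx.1.trans htT.1.1, htT.1.2⟩ htT.2))).and (Ioo_mem_nhdsLT hxt)).exists
  rw [slope_comm, slope_def_field, div_pos_iff_of_pos_right (sub_pos.2 hs.2)] at hs_slope
  have hft : f t ≤ z := htT.2
  linarith [habove s ⟨hs.1.le, hs.2⟩]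

theorem volume_sublevel_inter_Ioc_le {f : ℝ → ℝ} (hf : Differentiable ℝ f) {a b z K : ℝ}
    (hK : 0 < K) (hderiv : ∀ x ∈ Icc a b, f x ≤ z → K ≤ deriv f x) :
    volume ({x | f x ≤ z} ∩ Ioc a b) ≤ ENNReal.ofReal ((z - f a) / K) := by
  have hsub : {x | f x ≤ z} ∩ Ioc a b ⊆ Ioc a (a + (z - f a) / K) := by
    rintro y ⟨hy : f y ≤ z, hay, hyb⟩
    have hab : Icc a y ⊆ Icc a b := Icc_subset_Icc_right hyb
    have hsublevel := forall_Icc_le_of_deriv_pos_on_sublevel hf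
      (fun x hx hxz => hK.trans_le (hderiv x (hab hx) hxz)) hy
    have hmvt : K * (y - a) ≤ f y - f a :=
      (convex_Icc a y).mul_sub_le_image_sub_of_le_deriv hf.continuous.continuousOn
        hf.differentiableOn
        (fun x hx => hderiv x (hab (interior_subset hx)) (hsublevel x (interior_subset hx)))
        a ⟨le_rfl, hay.le⟩ y ⟨hay.le, le_rfl⟩ hay.le
    refine ⟨hay, ?_⟩
    rw [← sub_le_iff_le_add', le_div_iff₀ hK]
    linarith
  calc volume ({x | f x ≤ z} ∩ Ioc a b) ≤ volume (Ioc a (a + (z - f a) / K)) := measure_mono hsub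
    _ = ENNReal.ofReal ((z - f a) / K) := by rw [Real.volume_Ioc, add_sub_cancel_left]

theorem volume_sublevel_inter_Ioc_zero_le {f : ℝ → ℝ} (hf : Differentiable ℝ f)
    (hf0 : ∀ x, 0 ≤ x → 0 ≤ f x) {z m K : ℝ} (hm : 0 ≤ m) (hK : 0 < K)
    (hderiv : ∀ x, 0 ≤ x → f x ≤ z → m ≤ volume.real ({y | f y ≤ z} ∩ Ioc 0 x) →
      K ≤ deriv f x)
    (b : ℝ) :
    volume ({x | f x ≤ z} ∩ Ioc 0 b) ≤ ENNReal.ofReal m + ENNReal.ofReal (z / K) := by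
  set S := {x | f x ≤ z}
  by_cases hb : volume.real (S ∩ Ioc 0 b) ≤ m
  · rw [← ofReal_measureReal (measure_inter_Ioc_ne_top S 0 b)]
    exact (ENNReal.ofReal_le_ofReal hb).trans le_self_add
  obtain ⟨x₀, hx₀, hux₀⟩ : ∃ x₀ ∈ Icc 0 b, volume.real (S ∩ Ioc 0 x₀) = m := by
    have h0b : 0 ≤ b := by
      by_contra! h
      simp [Ioc_eq_empty_of_le h.le, hm] at hb
    refine intermediate_value_Icc h0b
      (lipschitzWith_one_volume_real_inter_Ioc S 0).continuous.continuousOn ⟨?_, (not_le.1 hb).le⟩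
    simpa using hm
  have hderiv' : ∀ x ∈ Icc x₀ b, f x ≤ z → K ≤ deriv f x := fun x hx hxz =>
    hderiv x (hx₀.1.trans hx.1) hxz <| hux₀ ▸ measureReal_mono
      (inter_subset_inter_right S (Ioc_subset_Ioc_right hx.1)) (measure_inter_Ioc_ne_top S 0 x)
  calc volume (S ∩ Ioc 0 b) ≤ volume (S ∩ Ioc 0 x₀) + volume (S ∩ Ioc x₀ b) :=
        (measure_mono (inter_Ioc_subset_union S 0 x₀ b)).trans (measure_union_le _ _)
    _ ≤ ENNReal.ofReal m + ENNReal.ofReal ((z - f x₀) / K) := by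
        rw [← ofReal_measureReal (measure_inter_Ioc_ne_top S 0 x₀), hux₀]
        exact add_le_add_right (volume_sublevel_inter_Ioc_le hf hK hderiv') _
    _ ≤ ENNReal.ofReal m + ENNReal.ofReal (z / K) := by
        gcongr
        linarith [hf0 x₀ hx₀.1]

theorem volume_sublevel_Ioi_le {f : ℝ → ℝ} (hf : Differentiable ℝ f)
    (hf0 : ∀ x, 0 ≤ x → 0 ≤ f x) {z m K : ℝ} (hm : 0 ≤ m) (hK : 0 < K)
    (hderiv : ∀ x, 0 ≤ x → f x ≤ z → m ≤ volume.real ({y | f y ≤ z} ∩ Ioc 0 x) →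
      K ≤ deriv f x) :
    volume {x | 0 < x ∧ f x ≤ z} ≤ ENNReal.ofReal m + ENNReal.ofReal (z / K) := by
  have hunion : {x | 0 < x ∧ f x ≤ z} = ⋃ n : ℕ, {x | f x ≤ z} ∩ Ioc 0 (n : ℝ) := by
    ext x
    simp only [mem_ofPred_eq, mem_iUnion, mem_inter_iff, mem_Ioc]
    exact ⟨fun ⟨hx, hfx⟩ => (exists_nat_ge x).imp fun n hn => ⟨hfx, hx, hn⟩,
      fun ⟨_, hfx, hx, _⟩ => ⟨hx, hfx⟩⟩
  have hmono : Monotone fun n : ℕ => {x | f x ≤ z} ∩ Ioc 0 (n : ℝ) := fun _ _ hmn =>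
    inter_subset_inter_right _ (Ioc_subset_Ioc_right (Nat.cast_le.2 hmn))
  rw [hunion, hmono.measure_iUnion]
  exact iSup_le fun n => volume_sublevel_inter_Ioc_zero_le hf hf0 hm hK hderiv n

theorem rpow_add_mul_sqrt_add_le {p δ z : ℝ} (hp : 1 ≤ p) (hδ : 0 < δ) (hδz : δ ≤ z) (β : ℝ)
    {c : ℝ} (hc : 0 ≤ c) :
    z ^ (1 - p / 2) + β * √z + c ≤ (δ ^ ((1 - p) / 2) + β + c / √δ) * √z := by
  have hz : z ^ (1 - p / 2) ≤ δ ^ ((1 - p) / 2) * √z := by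
    rw [sqrt_eq_rpow, show 1 - p / 2 = (1 - p) / 2 + 1 / 2 by ring, rpow_add (hδ.trans_le hδz)]
    exact mul_le_mul_of_nonneg_right (rpow_le_rpow_of_nonpos hδ hδz (by linarith))
      (rpow_nonneg (hδ.le.trans hδz) _)
  have hc' : c ≤ c / √δ * √z := by
    rw [div_mul_eq_mul_div, le_div_iff₀ (sqrt_pos.2 hδ)]
    gcongr
  calc z ^ (1 - p / 2) + β * √z + c ≤ δ ^ ((1 - p) / 2) * √z + β * √z + c / √δ * √z := by
        linarith
    _ = (δ ^ ((1 - p) / 2) + β + c / √δ) * √z := by ring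

theorem rpow_one_sub_half_le_deriv {f : ℝ → ℝ} (hf : Continuous f) {p α β γ δ z x : ℝ}
    (hp : 1 < p) (hα : 0 < α) (hβ : 0 ≤ β) (hδ : 0 < δ) (hδz : δ ≤ z) (hx : 0 ≤ x)
    (hfpos : ∀ y ∈ Icc 0 x, 0 < f y)
    (hineq : deriv f x ≥ α * (∫ y in (0 : ℝ)..x, f y ^ ((1 - p) / 2)) - β * √(f x) - γ)
    (hfx : f x ≤ z)
    (hm : (δ ^ ((1 - p) / 2) + β + |γ| / √δ) / α * z ^ (p / 2) ≤
      volume.real ({y | f y ≤ z} ∩ Ioc 0 x)) :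
    z ^ (1 - p / 2) ≤ deriv f x := by
  set A := δ ^ ((1 - p) / 2) + β + |γ| / √δ
  have hz : 0 < z := hδ.trans_le hδz
  have hsqrt_z : z ^ ((1 - p) / 2) * z ^ (p / 2) = √z := by
    rw [← rpow_add hz, sqrt_eq_rpow, show (1 - p) / 2 + p / 2 = 1 / 2 by ring]
  have hgrowth : α * (z ^ ((1 - p) / 2) * (A / α * z ^ (p / 2))) = A * √z := by
    rw [← hsqrt_z]
    field_simp
  have hintegral : α * (z ^ ((1 - p) / 2) * (A / α * z ^ (p / 2))) ≤
      α * ∫ y in (0 : ℝ)..x, f y ^ ((1 - p) / 2) :=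
    mul_le_mul_of_nonneg_left ((mul_le_mul_of_nonneg_left hm (rpow_nonneg hz.le _)).trans
      (mul_volume_real_sublevel_le_integral_rpow hf hx (by linarith) hfpos)) hα.le
  have hsqrt : β * √(f x) ≤ β * √z := mul_le_mul_of_nonneg_left (sqrt_le_sqrt hfx) hβ
  linarith [le_abs_self γ, rpow_add_mul_sqrt_add_le hp.le hδ hδz β (abs_nonneg γ)]

theorem sublevel_estimate (p α β γ δ : ℝ) (hp : 1 < p)
    (hα : 0 < α) (hβ : 0 < β) (hδ : 0 < δ)
    (f : ℝ → ℝ) (hf : ContDiff ℝ 1 f)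
    (hfδ : ∀ x : ℝ, 0 ≤ x → δ < f x)
    (hineq : ∀ x : ℝ, 0 ≤ x →
      deriv f x ≥ α * (∫ y in (0 : ℝ)..x, f y ^ ((1 - p) / 2)) - β * Real.sqrt (f x) - γ) :
    ∃ C : ℝ, ∀ z : ℝ, 0 < z →
      volume {x : ℝ | 0 < x ∧ f x ≤ z} ≤ ENNReal.ofReal (C * z ^ (p / 2)) := by
  set A := δ ^ ((1 - p) / 2) + β + |γ| / √δ
  refine ⟨A / α + 1, fun z hz => ?_⟩
  rcases le_or_gt z δ with hzδ | hδz
  · have hempty : {x : ℝ | 0 < x ∧ f x ≤ z} = ∅ :=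
      eq_empty_of_forall_notMem fun x hx => (hzδ.trans_lt (hfδ x hx.1.le)).not_ge hx.2
    simp [hempty]
  have hz' : z / z ^ (1 - p / 2) = z ^ (p / 2) := by
    rw [div_eq_iff (by positivity), ← rpow_add hz, add_sub_cancel, rpow_one]
  calc volume {x : ℝ | 0 < x ∧ f x ≤ z}
      ≤ ENNReal.ofReal (A / α * z ^ (p / 2)) + ENNReal.ofReal (z / z ^ (1 - p / 2)) :=
        volume_sublevel_Ioi_le (hf.differentiable one_ne_zero)
          (fun x hx => (hδ.trans (hfδ x hx)).le) (by positivity) (by positivity)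
          fun x hx hfx hm => rpow_one_sub_half_le_deriv hf.continuous hp hα hβ.le hδ hδz.le hx
            (fun y hy => hδ.trans (hfδ y hy.1)) (hineq x hx) hfx hm
    _ = ENNReal.ofReal ((A / α + 1) * z ^ (p / 2)) := by
        rw [hz', ← ENNReal.ofReal_add (by positivity) (by positivity), add_one_mul]
end

section
/- Let p > 1, let α, β > 0 and γ ≤ 0, and let f : ℝ → ℝ be continuously differentiable with f(x) > 0 for all x ≥ 0. Assume that for all x ≥ 0, f'(x) ≥ α · ∫₀ˣ f(y)^{(1-p)/2} dy - β·√(f(x)) - γ, and that f(0) < (α/β²)^{2/(p-1)}. Then inf_{x > 0} f(x) ≥ f(0)/4. -/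
/-!
Suppose `f` drops below `F / 4`, where `F = f 0`. Let `x₀` be the first time `f ≤ F / 4` and
`x₁ < x₀` the last time before it that `f ≥ F`. On `[x₁, x₀]` we have `f ≤ F`, so the inequality
gives `f' ≥ -β √F` there, and falling by `3F / 4` takes time `x₀ - x₁ ≥ 3 √F / (4β)`. At `x₀`,
`f'(x₀) ≤ 0`, while the integral has accumulated at least `(x₀ - x₁) F^((1-p)/2)`; hence
`α (x₀ - x₁) F^((1-p)/2) ≤ β √F / 2`. Together these force `α F^((1-p)/2) ≤ β²`, i.e.
`f 0 ≥ (α / β²)^(2/(p-1))`.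
-/

open MeasureTheory Real Set

lemma exists_first_le {f : ℝ → ℝ} {a b c : ℝ} (hf : ContinuousOn f (Icc a b)) (hab : a ≤ b)
    (hb : f b ≤ c) : ∃ x ∈ Icc a b, f x ≤ c ∧ ∀ y ∈ Ico a x, c < f y := by
  set S := Icc a b ∩ f ⁻¹' Iic c
  have hS : IsClosed S := hf.preimage_isClosed_of_isClosed isClosed_Icc isClosed_Iic
  have hbdd : BddBelow S := ⟨a, fun y hy => hy.1.1⟩
  have hmem : sInf S ∈ S := hS.csInf_mem ⟨b, ⟨hab, le_rfl⟩, hb⟩ hbdd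
  refine ⟨sInf S, hmem.1, hmem.2, fun y hy => not_le.1 fun hyc => ?_⟩
  exact hy.2.not_ge (csInf_le hbdd ⟨⟨hy.1, hy.2.le.trans hmem.1.2⟩, hyc⟩)

lemma exists_last_ge {f : ℝ → ℝ} {a b c : ℝ} (hf : ContinuousOn f (Icc a b)) (hab : a ≤ b)
    (ha : c ≤ f a) : ∃ x ∈ Icc a b, c ≤ f x ∧ ∀ y ∈ Ioc x b, f y < c := by
  set S := Icc a b ∩ f ⁻¹' Ici c
  have hS : IsClosed S := hf.preimage_isClosed_of_isClosed isClosed_Icc isClosed_Ici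
  have hbdd : BddAbove S := ⟨b, fun y hy => hy.1.2⟩
  have hmem : sSup S ∈ S := hS.csSup_mem ⟨a, ⟨le_rfl, hab⟩, ha⟩ hbdd
  refine ⟨sSup S, hmem.1, hmem.2, fun y hy => not_le.1 fun hyc => ?_⟩
  exact hy.1.not_ge (le_csSup hbdd ⟨⟨hmem.1.1.trans hy.1.le, hy.2⟩, hyc⟩)

lemma deriv_nonpos_of_forall_Ioo_le {f : ℝ → ℝ} {a b : ℝ} (hd : DifferentiableAt ℝ f a)
    (hb : b < a) (hmin : ∀ y ∈ Ioo b a, f a ≤ f y) : deriv f a ≤ 0 := by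
  have H := hd.hasDerivAt.hasDerivWithinAt (s := Iio a)
  rw [hasDerivWithinAt_iff_tendsto_slope, sdiff_singleton_eq_self self_notMem_Iio] at H
  refine le_of_tendsto H ?_
  filter_upwards [Ioo_mem_nhdsLT hb] with y hy
  rw [slope_def_field]
  exact div_nonpos_of_nonneg_of_nonpos (sub_nonneg.2 (hmin y hy)) (by linarith [hy.2])

lemma mul_sub_le_integral {g : ℝ → ℝ} {a b c m : ℝ} (hac : a ≤ c) (hcb : c ≤ b)
    (hg : IntervalIntegrable g volume a b) (hg₀ : ∀ y ∈ Icc a c, 0 ≤ g y)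
    (hgm : ∀ y ∈ Ioo c b, m ≤ g y) : m * (b - c) ≤ ∫ y in a..b, g y := by
  rw [intervalIntegrable_iff_integrableOn_Icc_of_le (hac.trans hcb)] at hg
  have hg₁ : IntervalIntegrable g volume a c :=
    (intervalIntegrable_iff_integrableOn_Icc_of_le hac).2 (hg.mono_set (Icc_subset_Icc_right hcb))
  have hg₂ : IntervalIntegrable g volume c b :=
    (intervalIntegrable_iff_integrableOn_Icc_of_le hcb).2 (hg.mono_set (Icc_subset_Icc_left hac))
  rw [← intervalIntegral.integral_add_adjacent_intervals hg₁ hg₂]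
  have hfirst := intervalIntegral.integral_nonneg (μ := volume) hac hg₀
  have hsecond := intervalIntegral.integral_mono_on_of_le_Ioo hcb intervalIntegrable_const hg₂ hgm
  rw [intervalIntegral.integral_const, smul_eq_mul] at hsecond
  linarith

lemma rpow_two_div_le_of_mul_rpow_le {p α β F : ℝ} (hp : 1 < p) (hα : 0 ≤ α) (hβ : β ≠ 0)
    (hF : 0 < F) (h : α * F ^ ((1 - p) / 2) ≤ β ^ 2) : (α / β ^ 2) ^ (2 / (p - 1)) ≤ F := by
  have hq : 0 < (p - 1) / 2 := by linarith
  rw [show 2 / (p - 1) = ((p - 1) / 2)⁻¹ by rw [inv_div],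
    rpow_inv_le_iff_of_pos (by positivity) hF.le hq, div_le_iff₀ (by positivity)]
  calc α = α * F ^ ((1 - p) / 2) * F ^ ((p - 1) / 2) := by
        rw [mul_assoc, ← rpow_add hF, add_div' _ _ _ two_ne_zero]; simp
    _ ≤ β ^ 2 * F ^ ((p - 1) / 2) := by gcongr
    _ = F ^ ((p - 1) / 2) * β ^ 2 := mul_comm _ _

lemma mul_le_sq_of_le_mul_sqrt {α β F L R : ℝ} (hα : 0 ≤ α) (hβ : 0 < β) (hF : 0 < F)
    (hR : 0 ≤ R) (hlen : 3 * F / 4 ≤ β * √F * L) (hfall : α * (R * L) ≤ β * √F / 2) :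
    α * R ≤ β ^ 2 := by
  have h : 3 * F / 4 * (α * R) ≤ β ^ 2 * F / 2 :=
    calc 3 * F / 4 * (α * R)
        ≤ β * √F * L * (α * R) := by gcongr
      _ = β * √F * (α * (R * L)) := by ring
      _ ≤ β * √F * (β * √F / 2) := by gcongr
      _ = β ^ 2 * F / 2 := by
        rw [show β * √F * (β * √F / 2) = β ^ 2 * √F ^ 2 / 2 by ring, sq_sqrt hF.le]
  nlinarith

lemma neg_mul_sqrt_le_deriv {p α β γ : ℝ} {f : ℝ → ℝ} (hα : 0 ≤ α) (hβ : 0 ≤ β) (hγ : γ ≤ 0)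
    (hfpos : ∀ x : ℝ, 0 ≤ x → 0 < f x)
    (hineq : ∀ x : ℝ, 0 ≤ x →
      deriv f x ≥ α * (∫ y in (0 : ℝ)..x, f y ^ ((1 - p) / 2)) - β * √(f x) - γ)
    {x F : ℝ} (hx : 0 ≤ x) (hfx : f x ≤ F) : -(β * √F) ≤ deriv f x := by
  have hint : 0 ≤ ∫ y in (0 : ℝ)..x, f y ^ ((1 - p) / 2) :=
    intervalIntegral.integral_nonneg hx fun y hy => (rpow_pos_of_pos (hfpos y hy.1) _).le
  have hsqrt := sqrt_le_sqrt hfx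
  nlinarith [hineq x hx]

theorem no_return_to_small_values (p α β γ : ℝ) (hp : 1 < p)
    (hα : 0 < α) (hβ : 0 < β) (hγ : γ ≤ 0)
    (f : ℝ → ℝ) (hf : ContDiff ℝ 1 f)
    (hfpos : ∀ x : ℝ, 0 ≤ x → 0 < f x)
    (hineq : ∀ x : ℝ, 0 ≤ x →
      deriv f x ≥ α * (∫ y in (0 : ℝ)..x, f y ^ ((1 - p) / 2)) - β * Real.sqrt (f x) - γ)
    (h0 : f 0 < (α / β ^ 2) ^ ((2 : ℝ) / (p - 1))) :
    ∀ x : ℝ, 0 < x → f 0 / 4 ≤ f x := by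
  intro x hx
  by_contra! hsmall
  set F := f 0
  have hF : 0 < F := hfpos 0 le_rfl
  have hcont : Continuous f := hf.continuous
  have hdiff : Differentiable ℝ f := hf.differentiable one_ne_zero
  obtain ⟨x₀, ⟨hx₀, -⟩, hfx₀, hbefore⟩ := exists_first_le hcont.continuousOn hx.le hsmall.le
  have hx₀pos : 0 < x₀ := hx₀.lt_of_ne (by rintro rfl; linarith)
  obtain ⟨x₁, ⟨hx₁, hx₁x₀⟩, hfx₁, hafter⟩ := exists_last_ge (c := F) hcont.continuousOn hx₀ le_rfl
  replace hx₁x₀ : x₁ < x₀ := hx₁x₀.lt_of_ne (by rintro rfl; linarith)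
  have hbelow : ∀ y ∈ Ioo x₁ x₀, f y ≤ F := fun y hy => (hafter y ⟨hy.1, hy.2.le⟩).le
  have hlen : 3 * F / 4 ≤ β * √F * (x₀ - x₁) := by
    have := (convex_Icc x₁ x₀).mul_sub_le_image_sub_of_le_deriv hcont.continuousOn
      hdiff.differentiableOn (fun y hy => by
        rw [interior_Icc] at hy
        exact neg_mul_sqrt_le_deriv hα.le hβ.le hγ hfpos hineq (hx₁.trans hy.1.le) (hbelow y hy))
      x₁ (left_mem_Icc.2 hx₁x₀.le) x₀ (right_mem_Icc.2 hx₁x₀.le) hx₁x₀.le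
    linarith
  have hstop : deriv f x₀ ≤ 0 := deriv_nonpos_of_forall_Ioo_le (hdiff x₀) hx₀pos
    fun y hy => hfx₀.trans (hbefore y ⟨hy.1.le, hy.2⟩).le
  have hint : F ^ ((1 - p) / 2) * (x₀ - x₁) ≤ ∫ y in (0 : ℝ)..x₀, f y ^ ((1 - p) / 2) := by
    refine mul_sub_le_integral hx₁ hx₁x₀.le ?_ (fun y hy => (rpow_pos_of_pos (hfpos y hy.1) _).le)
      fun y hy => rpow_le_rpow_of_nonpos (hfpos y (hx₁.trans hy.1.le)) (hbelow y hy) (by linarith)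
    refine (hcont.continuousOn.rpow_const fun y hy => Or.inl (hfpos y ?_).ne').intervalIntegrable
    exact (uIcc_of_le hx₀ ▸ hy).1
  have hsqrt : √(f x₀) ≤ √F / 2 :=
    sqrt_le_iff.2 ⟨by positivity, by rw [div_pow, sq_sqrt hF.le]; linarith⟩
  have hfall : α * (F ^ ((1 - p) / 2) * (x₀ - x₁)) ≤ β * √F / 2 := by
    nlinarith [hineq x₀ hx₀, mul_le_mul_of_nonneg_left hint hα.le]
  have hkey := mul_le_sq_of_le_mul_sqrt hα.le hβ hF (rpow_pos_of_pos hF _).le hlen hfall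
  exact h0.not_ge (rpow_two_div_le_of_mul_rpow_le hp hα.le hβ.ne' hF hkey)
end

section
/- Let A, B ⊂ ℝ be measurable sets of finite positive Lebesgue measure, with |A| = a and |B| = b. Then ∫_A ∫_B (x-y)² dy dx ≥ a·b·(a² + b²)/12, i.e. the double integral of (x-y)² over A × B is at least its value when A and B are intervals of lengths a and b centered at the same point. -/
open MeasureTheory
open scoped ENNReal

/-!
Fix `x`. By the parallel axis theorem, `∫_B (x - y)² dy = b (x - m)² + ∫_B (y - m)² dy`, where `m`
is the barycentre of `B`. By the bathtub principle, the second moment about any point `c` of a set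
of measure `a` is at least that of the interval of length `a` centred at `c`, namely `a³/12`.
Integrating over `A` therefore gives at least `b · a³/12 + a · b³/12`.
-/

theorem setLIntegral_le_setLIntegral_of_measure_eq {α : Type*} [MeasurableSpace α]
    {μ : Measure α} {f : α → ℝ≥0∞} {s t : Set α} {c : ℝ≥0∞}
    (hs : MeasurableSet s) (ht : MeasurableSet t) (hst : μ s = μ t) (hfin : μ s ≠ ∞)
    (hf_le : ∀ x ∈ s, f x ≤ c) (hf_ge : ∀ x ∉ s, c ≤ f x) :
    ∫⁻ x in s, f x ∂μ ≤ ∫⁻ x in t, f x ∂μ := by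
  have hdiff : μ (s \ t) = μ (t \ s) := measure_sdiff_symm hs.nullMeasurableSet
    ht.nullMeasurableSet hst (measure_ne_top_of_subset Set.inter_subset_left hfin)
  rw [← lintegral_inter_add_sdiff f s ht, ← lintegral_inter_add_sdiff f t hs, Set.inter_comm]
  refine add_le_add le_rfl ?_
  calc ∫⁻ x in s \ t, f x ∂μ ≤ ∫⁻ _ in s \ t, c ∂μ :=
        setLIntegral_mono' (hs.diff ht) fun x hx ↦ hf_le x hx.1
    _ = ∫⁻ _ in t \ s, c ∂μ := by rw [setLIntegral_const, setLIntegral_const, hdiff]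
    _ ≤ ∫⁻ x in t \ s, f x ∂μ := setLIntegral_mono' (ht.diff hs) fun x hx ↦ hf_ge x hx.2

theorem setLIntegral_Icc_sq_sub (c : ℝ) {a : ℝ} (ha : 0 ≤ a) :
    ∫⁻ x in Set.Icc (c - a / 2) (c + a / 2), ENNReal.ofReal ((x - c) ^ 2) =
      ENNReal.ofReal (a ^ 3 / 12) := by
  rw [← ofReal_integral_eq_lintegral_ofReal
      (by fun_prop : Continuous fun x : ℝ ↦ (x - c) ^ 2).integrableOn_Icc
      (.of_forall fun _ ↦ sq_nonneg _),
    integral_Icc_eq_integral_Ioc, ← intervalIntegral.integral_of_le (by linarith),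
    intervalIntegral.integral_comp_sub_right (· ^ 2), integral_pow]
  ring_nf

theorem cube_div_twelve_le_setLIntegral_sq_sub {A : Set ℝ} (hA : MeasurableSet A) {a : ℝ}
    (ha : 0 ≤ a) (hAa : volume A = ENNReal.ofReal a) (c : ℝ) :
    ENNReal.ofReal (a ^ 3 / 12) ≤ ∫⁻ x in A, ENNReal.ofReal ((x - c) ^ 2) := by
  rw [← setLIntegral_Icc_sq_sub c ha]
  refine setLIntegral_le_setLIntegral_of_measure_eq (c := ENNReal.ofReal ((a / 2) ^ 2))
    measurableSet_Icc hA (by rw [Real.volume_Icc, hAa]; ring_nf) (by simp) ?_ ?_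
  · rintro x ⟨hx₁, hx₂⟩
    exact ENNReal.ofReal_le_ofReal (by nlinarith)
  · intro x hx
    rw [Set.mem_Icc, not_and_or, not_le, not_le] at hx
    refine ENNReal.ofReal_le_ofReal ?_
    rcases hx with hx | hx <;> nlinarith

theorem integral_sub_sq_eq_of_memLp {μ : Measure ℝ} [IsFiniteMeasure μ] (hμ : MemLp id 2 μ)
    (z : ℝ) :
    ∫ y, (y - z) ^ 2 ∂μ = ∫ y, y ^ 2 ∂μ - 2 * z * ∫ y, y ∂μ + μ.real Set.univ * z ^ 2 := by
  have hsq : Integrable (fun y : ℝ ↦ y ^ 2) μ := (memLp_two_iff_integrable_sq (by fun_prop)).1 hμ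
  have hid : Integrable (fun y : ℝ ↦ y) μ := hμ.integrable one_le_two
  have hexpand (y : ℝ) : (y - z) ^ 2 = y ^ 2 - 2 * z * y + z ^ 2 := by ring
  simp_rw [hexpand]
  rw [integral_add, integral_sub, integral_const_mul, integral_const, smul_eq_mul]
  exacts [hsq, hid.const_mul _, hsq.sub (hid.const_mul _), integrable_const _]

theorem lintegral_ofReal_sub_sq_eq_top_of_not_memLp {μ : Measure ℝ} [IsFiniteMeasure μ]
    (hμ : ¬MemLp id 2 μ) (z : ℝ) :
    ∫⁻ y, ENNReal.ofReal ((y - z) ^ 2) ∂μ = ∞ := by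
  by_contra h
  have hsq := (lintegral_ofReal_ne_top_iff_integrable (by fun_prop)
    (ae_of_all _ fun _ ↦ sq_nonneg _)).1 h
  have hmem : MemLp (fun y ↦ y - z) 2 μ := (memLp_two_iff_integrable_sq (by fun_prop)).2 hsq
  exact hμ (by convert hmem.add (memLp_const z) using 1; ext; simp)

/-- Parallel axis theorem; when `id ∉ L²(μ)` both sides are `∞`. -/
theorem lintegral_ofReal_sub_sq_eq_add {μ : Measure ℝ} [IsFiniteMeasure μ] {m : ℝ}
    (hm : ∫ y, y ∂μ = μ.real Set.univ * m) (x : ℝ) :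
    ∫⁻ y, ENNReal.ofReal ((x - y) ^ 2) ∂μ =
      ENNReal.ofReal (μ.real Set.univ * (x - m) ^ 2) + ∫⁻ y, ENNReal.ofReal ((y - m) ^ 2) ∂μ := by
  simp_rw [sub_sq_comm x]
  by_cases hμ : MemLp id 2 μ
  · have hsq (z : ℝ) : Integrable (fun y ↦ (y - z) ^ 2) μ :=
      (memLp_two_iff_integrable_sq (by fun_prop)).1 (hμ.sub (memLp_const z))
    rw [← ofReal_integral_eq_lintegral_ofReal (hsq x) (ae_of_all _ fun _ ↦ sq_nonneg _),
      ← ofReal_integral_eq_lintegral_ofReal (hsq m) (ae_of_all _ fun _ ↦ sq_nonneg _),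
      ← ENNReal.ofReal_add (by positivity) (integral_nonneg fun _ ↦ sq_nonneg _),
      integral_sub_sq_eq_of_memLp hμ, integral_sub_sq_eq_of_memLp hμ, hm]
    ring_nf
  · simp only [lintegral_ofReal_sub_sq_eq_top_of_not_memLp hμ, add_top]

theorem interval_minimizes_interaction (A B : Set ℝ)
    (hA : MeasurableSet A) (hB : MeasurableSet B)
    (a b : ℝ) (ha : 0 < a) (hb : 0 < b)
    (hAa : volume A = ENNReal.ofReal a) (hBb : volume B = ENNReal.ofReal b) :
    ENNReal.ofReal (a * b * (a ^ 2 + b ^ 2) / 12) ≤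
      ∫⁻ x in A, ∫⁻ y in B, ENNReal.ofReal ((x - y) ^ 2) := by
  have : IsFiniteMeasure (volume.restrict B) := isFiniteMeasure_restrict.2 (by simp [hBb])
  have hBreal : (volume.restrict B).real Set.univ = b := by
    rw [measureReal_restrict_apply_univ, Measure.real, hBb, ENNReal.toReal_ofReal hb.le]
  set m := (∫ y in B, y) / b
  have hm : ∫ y in B, y = (volume.restrict B).real Set.univ * m := by
    rw [hBreal, mul_div_cancel₀ _ hb.ne']
  simp_rw [lintegral_ofReal_sub_sq_eq_add hm, hBreal]
  calc ENNReal.ofReal (a * b * (a ^ 2 + b ^ 2) / 12)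
      = ENNReal.ofReal b * ENNReal.ofReal (a ^ 3 / 12) +
          ENNReal.ofReal a * ENNReal.ofReal (b ^ 3 / 12) := by
        rw [← ENNReal.ofReal_mul hb.le, ← ENNReal.ofReal_mul ha.le,
          ← ENNReal.ofReal_add (by positivity) (by positivity)]
        ring_nf
    _ ≤ ENNReal.ofReal b * (∫⁻ x in A, ENNReal.ofReal ((x - m) ^ 2)) +
          volume A * ∫⁻ y in B, ENNReal.ofReal ((y - m) ^ 2) := by
        rw [hAa]
        gcongr
        exacts [cube_div_twelve_le_setLIntegral_sq_sub hA ha.le hAa m,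
          cube_div_twelve_le_setLIntegral_sq_sub hB hb.le hBb m]
    _ = ∫⁻ x in A, (ENNReal.ofReal (b * (x - m) ^ 2) +
          ∫⁻ y in B, ENNReal.ofReal ((y - m) ^ 2)) := by
        simp_rw [ENNReal.ofReal_mul hb.le]
        rw [lintegral_add_right _ measurable_const, setLIntegral_const,
          lintegral_const_mul _ (by fun_prop), mul_comm (volume A)]
end

section
/- Let u ∈ L²(ℝ) with M(u) = ∫_ℝ u(x)² dx > 0 and I(u) < ∞, and let a < b be real numbers such that ∫_{x < a} u(x)² dx = M(u)/4 and ∫_{x > b} u(x)² dx = M(u)/4. Then b - a ≤ 4·√(I(u)) / M(u). -/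
open MeasureTheory Real
open scoped ENNReal

noncomputable section

/-- `u'` is the weak (distributional) derivative of `u`. -/
def HasWeakDeriv (u u' : ℝ → ℝ) : Prop :=
  ∀ φ : ℝ → ℝ, ContDiff ℝ (⊤ : ℕ∞) φ → HasCompactSupport φ →
    ∫ x : ℝ, u x * deriv φ x = - ∫ x : ℝ, u' x * φ x

/-- The interaction functional `I(u)`, possibly `+∞`. -/
def interaction (u : ℝ → ℝ) : ℝ≥0∞ :=
  ∫⁻ x : ℝ, ∫⁻ y : ℝ, ENNReal.ofReal ((u x) ^ 2 * (x - y) ^ 2 * (u y) ^ 2)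

/-- The mass `M(u)`. -/
def mass (u : ℝ → ℝ) : ℝ := ∫ x : ℝ, (u x) ^ 2

theorem mass_concentration_interval (u : ℝ → ℝ)
    (hu : MemLp u 2 (volume : Measure ℝ))
    (hM : 0 < mass u) (hI : interaction u < ⊤)
    (a b : ℝ) (hab : a < b)
    (ha : ∫ x in Set.Iio a, (u x) ^ 2 = mass u / 4)
    (hb : ∫ x in Set.Ioi b, (u x) ^ 2 = mass u / 4) :
    b - a ≤ 4 * Real.sqrt (interaction u).toReal / mass u := by
  have hint : Integrable (fun x => (u x) ^ 2) (volume : Measure ℝ) := hu.integrable_sq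
  have hm4 : (0:ℝ) < mass u / 4 := by linarith
  have htail : ∀ s : Set ℝ, (∫ x in s, (u x)^2) = mass u / 4 →
      ∫⁻ y in s, ENNReal.ofReal ((u y)^2) = ENNReal.ofReal (mass u / 4) := by
    intro s hval
    rw [← ofReal_integral_eq_lintegral_ofReal (hint.restrict)
      (Filter.Eventually.of_forall fun y => sq_nonneg _), hval]
  have hIio := htail (Set.Iio a) ha
  have hIoi := htail (Set.Ioi b) hb
  have key : ENNReal.ofReal ((b - a)^2 * (mass u / 4) * (mass u / 4)) ≤ interaction u := by
    have pb : ∀ x ∈ Set.Iio a, ∀ y ∈ Set.Ioi b,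
        ENNReal.ofReal ((u x)^2 * (b-a)^2 * (u y)^2)
          ≤ ENNReal.ofReal ((u x)^2 * (x-y)^2 * (u y)^2) := by
      intro x hx y hy
      apply ENNReal.ofReal_le_ofReal
      have hx' : x < a := hx
      have hy' : b < y := hy
      have h1 : (b-a)^2 ≤ (x-y)^2 := by
        have h2 : (b-a)^2 ≤ (y-x)^2 := pow_le_pow_left₀ (by linarith) (by linarith) 2
        calc (b-a)^2 ≤ (y-x)^2 := h2
          _ = (x-y)^2 := by ring
      nlinarith [sq_nonneg (u x), sq_nonneg (u y), sq_nonneg ((u x)*(u y))]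
    have inner : ∀ x : ℝ, ∫⁻ y in Set.Ioi b, ENNReal.ofReal ((u x)^2 * (b-a)^2 * (u y)^2)
        = ENNReal.ofReal ((u x)^2) * (ENNReal.ofReal ((b-a)^2) * ENNReal.ofReal (mass u/4)) := by
      intro x
      have : ∀ y : ℝ, ENNReal.ofReal ((u x)^2 * (b-a)^2 * (u y)^2)
          = ENNReal.ofReal ((u x)^2 * (b-a)^2) * ENNReal.ofReal ((u y)^2) := fun y =>
        ENNReal.ofReal_mul (by positivity)
      simp_rw [this]
      rw [lintegral_const_mul' _ _ ENNReal.ofReal_ne_top, hIoi,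
        ENNReal.ofReal_mul (sq_nonneg (u x)), mul_assoc]
    calc ENNReal.ofReal ((b - a)^2 * (mass u / 4) * (mass u / 4))
        = ∫⁻ x in Set.Iio a, ∫⁻ y in Set.Ioi b,
            ENNReal.ofReal ((u x)^2 * (b-a)^2 * (u y)^2) := by
          simp_rw [inner]
          rw [lintegral_mul_const' _ _
            (ENNReal.mul_ne_top ENNReal.ofReal_ne_top ENNReal.ofReal_ne_top), hIio,
            ENNReal.ofReal_mul (by positivity : (0:ℝ) ≤ (b-a)^2 * (mass u/4)),
            ENNReal.ofReal_mul (sq_nonneg (b-a))]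
          ring
      _ ≤ ∫⁻ x in Set.Iio a, ∫⁻ y in Set.Ioi b,
            ENNReal.ofReal ((u x)^2 * (x-y)^2 * (u y)^2) := by
          refine lintegral_mono_ae ?_
          filter_upwards [ae_restrict_mem measurableSet_Iio] with x hx
          refine lintegral_mono_ae ?_
          filter_upwards [ae_restrict_mem measurableSet_Ioi] with y hy
          exact pb x hx y hy
      _ ≤ ∫⁻ x in Set.Iio a, ∫⁻ y, ENNReal.ofReal ((u x)^2 * (x-y)^2 * (u y)^2) :=
          lintegral_mono fun x => setLIntegral_le_lintegral _ _
      _ ≤ interaction u := setLIntegral_le_lintegral _ _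
  have key2 : (b-a)^2 * (mass u/4) * (mass u/4) ≤ (interaction u).toReal := by
    have h := ENNReal.toReal_mono hI.ne key
    rwa [ENNReal.toReal_ofReal
      (mul_nonneg (mul_nonneg (sq_nonneg _) hm4.le) hm4.le)] at h
  have hsq : ((b-a) * (mass u/4))^2 ≤ (interaction u).toReal := by nlinarith
  have hpos : 0 < (b-a) * (mass u/4) := mul_pos (by linarith) hm4
  have hle : (b-a) * (mass u/4) ≤ Real.sqrt (interaction u).toReal :=
    (Real.le_sqrt' hpos).mpr hsq
  rw [le_div_iff₀ hM]
  nlinarith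
end
end

section
/- Let p > 1 and let u ∈ L²(ℝ) ∩ L^{p+1}(ℝ) with M(u) = ∫_ℝ u(x)² dx > 0 and 0 < I(u) < ∞. Then (∫_ℝ |u(x)|^{p+1} dx)² ≥ 2^{-(3p-1)} · M(u)^{2p} · I(u)^{(1-p)/2}. -/
open MeasureTheory Real
open scoped ENNReal

noncomputable section

/-- Hölder on a set. -/
lemma holder_on_set {p : ℝ} (hp : 1 < p) {g : ℝ → ℝ} (hg : Measurable g)
    {s : Set ℝ} (hs : MeasurableSet s) :
    ∫⁻ x in s, ENNReal.ofReal (g x ^ 2) ≤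
      (∫⁻ x, ENNReal.ofReal (|g x| ^ (p + 1))) ^ (2 / (p + 1)) *
        (volume s) ^ ((p - 1) / (p + 1)) := by
  have hp1 : (0:ℝ) < p + 1 := by linarith
  have hconj : ((p+1)/2).HolderConjugate ((p+1)/(p-1)) := by
    rw [Real.holderConjugate_iff]
    constructor
    · rw [lt_div_iff₀ (by norm_num)]; linarith
    · rw [inv_div, inv_div]; field_simp; ring
  have hf : Measurable fun x => ENNReal.ofReal (g x ^ 2) :=
    (hg.pow_const 2).ennreal_ofReal
  have hind : Measurable (s.indicator (fun _ => (1:ℝ≥0∞))) :=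
    measurable_const.indicator hs
  have key := ENNReal.lintegral_mul_le_Lp_mul_Lq volume hconj hf.aemeasurable hind.aemeasurable
  have h1 : ∫⁻ x, ((fun x => ENNReal.ofReal (g x ^ 2)) * s.indicator (fun _ => (1:ℝ≥0∞))) x
      = ∫⁻ x in s, ENNReal.ofReal (g x ^ 2) := by
    rw [← lintegral_indicator hs]
    congr 1; ext x
    by_cases hx : x ∈ s <;> simp [Set.indicator_apply, hx]
  have h2 : ∫⁻ x, (s.indicator (fun _ => (1:ℝ≥0∞)) x) ^ ((p+1)/(p-1)) = volume s := by
    rw [← lintegral_indicator_one hs]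
    congr 1; ext x
    by_cases hx : x ∈ s <;>
      simp [Set.indicator_apply, hx,
        ENNReal.zero_rpow_of_pos (div_pos hp1 (by linarith) : (0:ℝ) < (p+1)/(p-1))]
  have h3 : ∀ x, (ENNReal.ofReal (g x ^ 2)) ^ ((p+1)/2) = ENNReal.ofReal (|g x| ^ (p + 1)) := by
    intro x
    rw [ENNReal.ofReal_rpow_of_nonneg (sq_nonneg _) (by positivity)]
    congr 1
    rw [← sq_abs, ← Real.rpow_natCast |g x| 2, ← Real.rpow_mul (abs_nonneg _)]
    congr 1
    push_cast
    ring
  rw [h1] at key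
  simp_rw [h2, h3, one_div, inv_div] at key
  exact key

lemma key_bound {p : ℝ} (hp : 1 < p) {g : ℝ → ℝ} (hg : Measurable g) {R : ℝ} (hR : 0 < R) :
    (∫⁻ x, ENNReal.ofReal (g x ^ 2)) ^ 2 ≤
      (∫⁻ x, ENNReal.ofReal (g x ^ 2)) *
        ((∫⁻ x, ENNReal.ofReal (|g x| ^ (p + 1))) ^ (2 / (p + 1)) *
          (ENNReal.ofReal (2 * R)) ^ ((p - 1) / (p + 1))) +
      (∫⁻ x, ∫⁻ y, ENNReal.ofReal (g x ^ 2) * ENNReal.ofReal ((x - y) ^ 2) *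
        ENNReal.ofReal (g y ^ 2)) * (ENNReal.ofReal (R ^ 2))⁻¹ := by
  set f : ℝ → ℝ≥0∞ := fun x => ENNReal.ofReal (g x ^ 2) with hfdef
  have hf : Measurable f := (hg.pow_const 2).ennreal_ofReal
  set Np : ℝ≥0∞ := ∫⁻ x, ENNReal.ofReal (|g x| ^ (p + 1)) with hNp
  set C : ℝ≥0∞ := Np ^ (2 / (p + 1)) * (ENNReal.ofReal (2 * R)) ^ ((p - 1) / (p + 1)) with hC
  set c : ℝ≥0∞ := (ENNReal.ofReal (R ^ 2))⁻¹ with hc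
  have hc_ne_top : c ≠ ⊤ := by
    rw [hc, Ne, ENNReal.inv_eq_top]
    exact (ENNReal.ofReal_pos.2 (by positivity)).ne'
  have hball : ∀ x : ℝ, ∫⁻ y in Metric.ball x R, f y ≤ C := by
    intro x
    refine (holder_on_set hp hg measurableSet_ball).trans_eq ?_
    rw [Real.volume_ball]
  -- step A
  have hA : (∫⁻ x, f x) ^ 2 = ∫⁻ x, ∫⁻ y, f x * f y := by
    rw [pow_two, ← lintegral_mul_const _ hf]
    exact lintegral_congr fun x => (lintegral_const_mul (f x) hf).symm
  -- step B
  have hB : ∀ x : ℝ, ∫⁻ y, f x * f y ≤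
      f x * C + (∫⁻ y, f x * ENNReal.ofReal ((x - y) ^ 2) * f y) * c := by
    intro x
    have hpt : ∀ y : ℝ, f x * f y ≤
        (Metric.ball x R).indicator (fun y => f x * f y) y +
          f x * ENNReal.ofReal ((x - y) ^ 2) * f y * c := by
      intro y
      by_cases hy : y ∈ Metric.ball x R
      · rw [Set.indicator_of_mem hy]; exact le_self_add
      · rw [Set.indicator_of_notMem hy, zero_add]
        have hdist : R ≤ |x - y| := by
          have := Metric.mem_ball.not.1 hy
          rw [Real.dist_eq, abs_sub_comm] at this
          linarith [not_lt.1 this]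
        have hsq : R ^ 2 ≤ (x - y) ^ 2 := by
          rw [← sq_abs (x - y)]
          exact pow_le_pow_left₀ hR.le hdist 2
        have hone : (1 : ℝ≥0∞) ≤ ENNReal.ofReal ((x - y) ^ 2) * c := by
          rw [hc, ← div_eq_mul_inv,
            ENNReal.le_div_iff_mul_le (Or.inl (ENNReal.ofReal_pos.2 (by positivity)).ne')
              (Or.inl ENNReal.ofReal_ne_top), one_mul]
          exact ENNReal.ofReal_le_ofReal hsq
        calc f x * f y = f x * f y * 1 := (mul_one _).symm
          _ ≤ f x * f y * (ENNReal.ofReal ((x - y) ^ 2) * c) := mul_le_mul_right hone _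
          _ = f x * ENNReal.ofReal ((x - y) ^ 2) * f y * c := by ring
    calc ∫⁻ y, f x * f y
        ≤ ∫⁻ y, ((Metric.ball x R).indicator (fun y => f x * f y) y +
            f x * ENNReal.ofReal ((x - y) ^ 2) * f y * c) := lintegral_mono hpt
      _ = (∫⁻ y, (Metric.ball x R).indicator (fun y => f x * f y) y) +
          ∫⁻ y, f x * ENNReal.ofReal ((x - y) ^ 2) * f y * c :=
            lintegral_add_left ((hf.const_mul (f x)).indicator measurableSet_ball) _
      _ ≤ f x * C + (∫⁻ y, f x * ENNReal.ofReal ((x - y) ^ 2) * f y) * c := by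
          gcongr
          · rw [lintegral_indicator measurableSet_ball,
              lintegral_const_mul (f x) hf]
            exact mul_le_mul_right (hball x) _
          · rw [lintegral_mul_const' c _ hc_ne_top]
  -- step C
  calc (∫⁻ x, f x) ^ 2 = ∫⁻ x, ∫⁻ y, f x * f y := hA
    _ ≤ ∫⁻ x, (f x * C + (∫⁻ y, f x * ENNReal.ofReal ((x - y) ^ 2) * f y) * c) :=
        lintegral_mono hB
    _ = (∫⁻ x, f x * C) + ∫⁻ x, (∫⁻ y, f x * ENNReal.ofReal ((x - y) ^ 2) * f y) * c :=
        lintegral_add_left (hf.mul_const C) _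
    _ = (∫⁻ x, f x) * C +
        (∫⁻ x, ∫⁻ y, f x * ENNReal.ofReal ((x - y) ^ 2) * f y) * c := by
        rw [lintegral_mul_const C hf, lintegral_mul_const' c _ hc_ne_top]

theorem lp_norm_lower_bound (p : ℝ) (hp : 1 < p) (u : ℝ → ℝ)
    (hu2 : MemLp u 2 (volume : Measure ℝ))
    (hup : MemLp u (ENNReal.ofReal (p + 1)) (volume : Measure ℝ))
    (hM : 0 < mass u) (hI0 : 0 < interaction u) (hIfin : interaction u < ⊤) :
    (∫ x : ℝ, |u x| ^ (p + 1)) ^ 2 ≥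
      (2 : ℝ) ^ (-(3 * p - 1)) * mass u ^ (2 * p) *
        (interaction u).toReal ^ ((1 - p) / 2) := by
  have hp1 : (0:ℝ) < p + 1 := by linarith
  obtain hmu := hu2.aestronglyMeasurable.aemeasurable
  set g : ℝ → ℝ := hmu.mk u with hgdef
  have hg : Measurable g := hmu.measurable_mk
  have hug : u =ᵐ[volume] g := hmu.ae_eq_mk
  set M := mass u with hMdef
  have hMne : M ≠ 0 := hM.ne'
  set Ir := (interaction u).toReal with hIrdef
  have hIrpos : 0 < Ir := ENNReal.toReal_pos hI0.ne' hIfin.ne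
  have hIrne : Ir ≠ 0 := hIrpos.ne'
  set J := ∫ x : ℝ, |u x| ^ (p + 1) with hJdef
  have hJnn : 0 ≤ J := integral_nonneg fun x => Real.rpow_nonneg (abs_nonneg _) _
  -- identify the lintegrals
  have hMlin : ∫⁻ x, ENNReal.ofReal (g x ^ 2) = ENNReal.ofReal M := by
    rw [hMdef, mass, ofReal_integral_eq_lintegral_ofReal hu2.integrable_sq
      (Filter.Eventually.of_forall fun x => sq_nonneg _)]
    exact (lintegral_congr_ae (hug.mono fun x hx => by rw [hx])).symm
  have hJint : Integrable (fun x => |u x| ^ (p + 1)) := by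
    have h0 : ENNReal.ofReal (p + 1) ≠ 0 := (ENNReal.ofReal_pos.2 hp1).ne'
    have := hup.integrable_norm_rpow h0 ENNReal.ofReal_ne_top
    simpa [ENNReal.toReal_ofReal hp1.le, Real.norm_eq_abs] using this
  have hJlin : ∫⁻ x, ENNReal.ofReal (|g x| ^ (p + 1)) = ENNReal.ofReal J := by
    rw [hJdef, ofReal_integral_eq_lintegral_ofReal hJint
      (Filter.Eventually.of_forall fun x => Real.rpow_nonneg (abs_nonneg _) _)]
    exact (lintegral_congr_ae (hug.mono fun x hx => by rw [hx])).symm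
  have hIlin : (∫⁻ x, ∫⁻ y, ENNReal.ofReal (g x ^ 2) * ENNReal.ofReal ((x - y) ^ 2) *
      ENNReal.ofReal (g y ^ 2)) = interaction u := by
    rw [interaction]
    refine lintegral_congr_ae (hug.mono fun x hx => ?_)
    simp only []
    refine lintegral_congr_ae (hug.mono fun y hy => ?_)
    simp only []
    rw [hx, hy, ENNReal.ofReal_mul (by positivity), ENNReal.ofReal_mul (by positivity)]
  -- choose R
  set R : ℝ := Real.sqrt (2 * Ir) / M with hRdef
  have hRpos : 0 < R := div_pos (Real.sqrt_pos.2 (by linarith)) hM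
  have key := key_bound hp hg hRpos
  rw [hMlin, hJlin, hIlin] at key
  -- convert to a real inequality
  have e1 : (ENNReal.ofReal J) ^ (2 / (p + 1)) = ENNReal.ofReal (J ^ (2 / (p + 1))) :=
    ENNReal.ofReal_rpow_of_nonneg hJnn (by positivity)
  have e2 : (ENNReal.ofReal (2 * R)) ^ ((p - 1) / (p + 1)) =
      ENNReal.ofReal ((2 * R) ^ ((p - 1) / (p + 1))) :=
    ENNReal.ofReal_rpow_of_nonneg (by positivity) (div_nonneg (by linarith) hp1.le)
  have e3 : interaction u = ENNReal.ofReal Ir := (ENNReal.ofReal_toReal hIfin.ne).symm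
  have e4 : ENNReal.ofReal Ir * (ENNReal.ofReal (R ^ 2))⁻¹ = ENNReal.ofReal (Ir / R ^ 2) := by
    rw [ENNReal.ofReal_div_of_pos (by positivity), div_eq_mul_inv]
  rw [e1, e2, e3, e4, ← ENNReal.ofReal_mul (by positivity), ← ENNReal.ofReal_mul hM.le,
    ← ENNReal.ofReal_add (by positivity) (by positivity),
    ← ENNReal.ofReal_pow hM.le] at key
  have hreal : M ^ 2 ≤ M * (J ^ (2 / (p + 1)) * (2 * R) ^ ((p - 1) / (p + 1))) + Ir / R ^ 2 :=
    (ENNReal.ofReal_le_ofReal_iff (by positivity)).1 key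
  -- simplify Ir / R^2
  have hR2 : R ^ 2 = 2 * Ir / M ^ 2 := by
    rw [hRdef, div_pow, Real.sq_sqrt (by linarith)]
  have hIrR : Ir / R ^ 2 = M ^ 2 / 2 := by
    rw [hR2]; field_simp
  rw [hIrR] at hreal
  have hc : M / 2 ≤ J ^ (2 / (p + 1)) * (2 * R) ^ ((p - 1) / (p + 1)) := by
    rw [← mul_le_mul_iff_right₀ hM]
    nlinarith [hreal]
  have hJpos : 0 < J := by
    rcases hJnn.lt_or_eq with h | h
    · exact h
    · exfalso
      rw [← h, Real.zero_rpow (by positivity), zero_mul] at hc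
      linarith
  -- pass to logarithms
  rw [ge_iff_le, ← Real.log_le_log_iff (by positivity) (by positivity)]
  have hlog := (Real.log_le_log_iff (by positivity) (by positivity)).2 hc
  rw [Real.log_div hMne two_ne_zero,
    Real.log_mul (Real.rpow_pos_of_pos hJpos _).ne' (Real.rpow_pos_of_pos (by positivity) _).ne',
    Real.log_rpow hJpos, Real.log_rpow (by positivity)] at hlog
  have hlog2R : Real.log (2 * R) =
      Real.log 2 + (Real.log 2 + Real.log Ir) / 2 - Real.log M := by
    rw [hRdef, Real.log_mul two_ne_zero hRpos.ne',
      Real.log_div (Real.sqrt_pos.2 (by linarith)).ne' hMne,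
      Real.log_sqrt (by linarith), Real.log_mul two_ne_zero hIrne]
    ring
  rw [hlog2R] at hlog
  rw [Real.log_mul (by positivity) (by positivity), Real.log_mul (by positivity) (by positivity),
    Real.log_rpow two_pos, Real.log_rpow hM, Real.log_rpow hIrpos, Real.log_pow]
  have hlog' := mul_le_mul_of_nonneg_left hlog hp1.le
  have hexp : (p + 1) * (2 / (p + 1) * Real.log J + (p - 1) / (p + 1) *
      (Real.log 2 + (Real.log 2 + Real.log Ir) / 2 - Real.log M)) =
      2 * Real.log J + (p - 1) * (Real.log 2 + (Real.log 2 + Real.log Ir) / 2 - Real.log M) := by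
    field_simp
  rw [hexp] at hlog'
  have hL2 : 0 < Real.log 2 := Real.log_pos one_lt_two
  nlinarith [hlog', mul_nonneg (by linarith : (0:ℝ) ≤ p - 1) hL2.le]
end
end

section
/- Let p ≥ √3, let a, b > 0, and let q, r, s ∈ (0,1) satisfy 1 - q² - r² - s² + 2qrs ≥ 0. Then (3/2)(1-q²)a² + (2s - ((p+3)/(p+1))·q·r)·a·b + (1/2)(1-r²)b² > 0. -/
set_option maxHeartbeats 1000000 in
theorem tao_monotonicity_algebraic (p a b q r s : ℝ)
    (hp : Real.sqrt 3 ≤ p) (ha : 0 < a) (hb : 0 < b)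
    (hq : q ∈ Set.Ioo (0 : ℝ) 1) (hr : r ∈ Set.Ioo (0 : ℝ) 1) (hs : s ∈ Set.Ioo (0 : ℝ) 1)
    (hqrs : 0 ≤ 1 - q ^ 2 - r ^ 2 - s ^ 2 + 2 * q * r * s) :
    0 < (3 / 2) * (1 - q ^ 2) * a ^ 2 + (2 * s - ((p + 3) / (p + 1)) * q * r) * a * b
        + (1 / 2) * (1 - r ^ 2) * b ^ 2 := by
  obtain ⟨hq0, hq1⟩ := hq
  obtain ⟨hr0, hr1⟩ := hr
  obtain ⟨hs0, hs1⟩ := hs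
  set t := Real.sqrt 3 with ht
  have ht2 : t ^ 2 = 3 := Real.sq_sqrt (by norm_num)
  have ht1 : 1 < t := by nlinarith [Real.sqrt_nonneg 3]
  have hp1 : 0 < p + 1 := by linarith
  set c := (p + 3) / (p + 1) with hc
  have hct : c ≤ t := by
    rw [hc, div_le_iff₀ hp1]
    nlinarith
  have hc1 : 1 < c := by
    rw [hc, lt_div_iff₀ hp1]
    linarith
  clear_value t c
  clear hp hp1 hc ht
  rcases le_or_gt (c * q * r) (2 * s) with hcase | hcase
  · have h1 : 0 ≤ (2 * s - c * q * r) * a * b := mul_nonneg (mul_nonneg (by linarith) ha.le) hb.le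
    nlinarith [mul_pos (mul_pos ha ha) (by nlinarith : (0:ℝ) < 1 - q ^ 2),
      mul_pos (mul_pos hb hb) (by nlinarith : (0:ℝ) < 1 - r ^ 2)]
  · -- discriminant case
    have hqr : 0 < q * r := mul_pos hq0 hr0
    have h7 : 12 < 7 * t := by nlinarith
    have hm : 0 < c * q * r - 2 * s := by linarith
    have hstqr : 2 * s < t * q * r := lt_of_lt_of_le hcase (by nlinarith)
    have hpos : 0 < 4 * t * q * r - 6 * q * r - s := by nlinarith
    have hD : (c * q * r - 2 * s) ^ 2 < 3 * (1 - q ^ 2) * (1 - r ^ 2) := by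
      have key : (t * q * r - 2 * s) ^ 2 < 3 * (1 - q ^ 2) * (1 - r ^ 2) := by
        have h1 := mul_pos hs0 hpos
        have e : 3 * (1 - q ^ 2) * (1 - r ^ 2) - (t * q * r - 2 * s) ^ 2
            = 3 * (1 - q ^ 2 - r ^ 2 - s ^ 2 + 2 * q * r * s)
              + s * (4 * t * q * r - 6 * q * r - s) + (3 - t ^ 2) * (q * r) ^ 2 := by ring
        rw [ht2] at e
        linarith [e.ge, e.le]
      have hmt : c * q * r - 2 * s ≤ t * q * r - 2 * s := by
        have := mul_le_mul_of_nonneg_right hct hqr.le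
        linarith
      have hsq : (c * q * r - 2 * s) ^ 2 ≤ (t * q * r - 2 * s) ^ 2 :=
        pow_le_pow_left₀ hm.le hmt 2
      linarith
    have hq2 : 0 < 1 - q ^ 2 := by nlinarith
    have hfin : 6 * (1 - q ^ 2) * ((3 / 2) * (1 - q ^ 2) * a ^ 2
          + (2 * s - c * q * r) * a * b + (1 / 2) * (1 - r ^ 2) * b ^ 2)
        = (3 * (1 - q ^ 2) * a - (c * q * r - 2 * s) * b) ^ 2
          + (3 * (1 - q ^ 2) * (1 - r ^ 2) - (c * q * r - 2 * s) ^ 2) * b ^ 2 := by ring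
    have h3 : 0 < 6 * (1 - q ^ 2) * ((3 / 2) * (1 - q ^ 2) * a ^ 2
        + (2 * s - c * q * r) * a * b + (1 / 2) * (1 - r ^ 2) * b ^ 2) := by
      rw [hfin]
      have := sq_nonneg (3 * (1 - q ^ 2) * a - (c * q * r - 2 * s) * b)
      nlinarith [mul_pos (by linarith : (0:ℝ) < 3 * (1 - q ^ 2) * (1 - r ^ 2) - (c * q * r - 2 * s) ^ 2) (mul_pos hb hb)]
    nlinarith [h3, hq2]
end

section
/- Let p ≥ √3, let a, b > 0, and let q, r, s ∈ (0,1) satisfy 1 - q² - r² - s² + 2qrs ≥ 0. Then (3/2)(1-q²)a² + (2s - ((p+3)/(p+1))·q·r)·a·b + (1/2)(1 - (4p/(p+1)²)·r²)·b² ≥ (1/2 - 2p/(p+1)²)·b²·r². -/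
set_option maxHeartbeats 800000

theorem refined_monotonicity_algebraic (p a b q r s : ℝ)
    (hp : Real.sqrt 3 ≤ p) (ha : 0 < a) (hb : 0 < b)
    (hq : q ∈ Set.Ioo (0 : ℝ) 1) (hr : r ∈ Set.Ioo (0 : ℝ) 1) (hs : s ∈ Set.Ioo (0 : ℝ) 1)
    (hqrs : 0 ≤ 1 - q ^ 2 - r ^ 2 - s ^ 2 + 2 * q * r * s) :
    (3 / 2) * (1 - q ^ 2) * a ^ 2 + (2 * s - ((p + 3) / (p + 1)) * q * r) * a * b
        + (1 / 2) * (1 - (4 * p / (p + 1) ^ 2) * r ^ 2) * b ^ 2 ≥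
      (1 / 2 - 2 * p / (p + 1) ^ 2) * b ^ 2 * r ^ 2 := by
  obtain ⟨hq0, hq1⟩ := hq
  obtain ⟨hr0, hr1⟩ := hr
  obtain ⟨hs0, hs1⟩ := hs
  set t := Real.sqrt 3 with ht
  have ht2 : t ^ 2 = 3 := Real.sq_sqrt (by norm_num)
  have ht1 : (1 : ℝ) ≤ t := by nlinarith [Real.sqrt_nonneg 3]
  have ht127 : (12 : ℝ) / 7 ≤ t := by nlinarith [Real.sqrt_nonneg 3]
  have hp1 : (0 : ℝ) < p + 1 := by linarith
  -- c ≤ √3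
  have hc : (p + 3) / (p + 1) ≤ t := by
    rw [div_le_iff₀ hp1]
    nlinarith [mul_nonneg (sub_nonneg.2 ht1) (sub_nonneg.2 hp)]
  have hqr : 0 < q * r := mul_pos hq0 hr0
  -- constraint in product form
  have hcon : (s - q * r) ^ 2 ≤ (1 - q ^ 2) * (1 - r ^ 2) := by nlinarith
  have hX : 0 < 1 - q ^ 2 := by nlinarith
  have hY : 0 < 1 - r ^ 2 := by nlinarith
  -- key reduced inequality
  have key : 0 ≤ (3 / 2) * (1 - q ^ 2) * a ^ 2 + (2 * s - t * (q * r)) * a * b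
      + (1 / 2) * (1 - r ^ 2) * b ^ 2 := by
    rcases le_or_gt 0 (2 * s - t * (q * r)) with hM | hM
    · have h1 : 0 ≤ (3 / 2) * (1 - q ^ 2) * a ^ 2 := by positivity
      have h2 : 0 ≤ (1 / 2) * (1 - r ^ 2) * b ^ 2 := by positivity
      have h3 : 0 ≤ (2 * s - t * (q * r)) * a * b :=
        mul_nonneg (mul_nonneg hM ha.le) hb.le
      linarith
    · -- here 2s < t q r, so M² ≤ 3 (qr - s)² ≤ 3 X Y
      have hM2 : (2 * s - t * (q * r)) ^ 2 ≤ 3 * ((1 - q ^ 2) * (1 - r ^ 2)) := by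
        have h1 : (2 * s - t * (q * r)) ^ 2 ≤ 3 * (s - q * r) ^ 2 := by
          nlinarith [mul_pos hs0 hqr, mul_pos hqr hqr]
        nlinarith
      have h6 : 0 ≤ 6 * (1 - q ^ 2) * ((3 / 2) * (1 - q ^ 2) * a ^ 2
          + (2 * s - t * (q * r)) * a * b + (1 / 2) * (1 - r ^ 2) * b ^ 2) := by
        have hid : 6 * (1 - q ^ 2) * ((3 / 2) * (1 - q ^ 2) * a ^ 2
            + (2 * s - t * (q * r)) * a * b + (1 / 2) * (1 - r ^ 2) * b ^ 2)
            = (3 * (1 - q ^ 2) * a + (2 * s - t * (q * r)) * b) ^ 2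
              + (3 * ((1 - q ^ 2) * (1 - r ^ 2)) - (2 * s - t * (q * r)) ^ 2) * b ^ 2 := by
          ring
        rw [hid]
        have h4 : 0 ≤ (3 * ((1 - q ^ 2) * (1 - r ^ 2)) - (2 * s - t * (q * r)) ^ 2) * b ^ 2 :=
          mul_nonneg (by linarith) (sq_nonneg b)
        nlinarith [sq_nonneg (3 * (1 - q ^ 2) * a + (2 * s - t * (q * r)) * b)]
      exact nonneg_of_mul_nonneg_right h6 (by linarith)
  -- middle coefficient bounded below
  have hmid : (2 * s - t * (q * r)) * a * b ≤ ((2 * s - ((p + 3) / (p + 1)) * q * r)) * a * b := by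
    have : (p + 3) / (p + 1) * q * r ≤ t * (q * r) := by
      have := mul_le_mul_of_nonneg_right hc hqr.le
      linarith [this]
    have hab : (0:ℝ) ≤ a * b := (mul_pos ha hb).le
    nlinarith [mul_le_mul_of_nonneg_right (show 2 * s - t * (q*r) ≤ 2 * s - (p+3)/(p+1) * q * r by linarith) hab]
  rw [ge_iff_le, ← sub_nonneg]
  have hred : (3 / 2) * (1 - q ^ 2) * a ^ 2 + (2 * s - ((p + 3) / (p + 1)) * q * r) * a * b
        + (1 / 2) * (1 - (4 * p / (p + 1) ^ 2) * r ^ 2) * b ^ 2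
        - (1 / 2 - 2 * p / (p + 1) ^ 2) * b ^ 2 * r ^ 2
      = (3 / 2) * (1 - q ^ 2) * a ^ 2 + (2 * s - ((p + 3) / (p + 1)) * q * r) * a * b
        + (1 / 2) * (1 - r ^ 2) * b ^ 2 := by
    field_simp
    ring
  rw [hred]
  linarith
end

section
/- Let f : ℝ → ℝ be integrable, nonnegative, even, and nonincreasing on [0, ∞). Then for every ξ ≠ 0, |∫_ℝ f(x) cos(ξ x) dx| ≤ 4·f(0)/|ξ|. -/
/-!
Rescaling reduces to frequency one, and evenness to the half-line. Since `cos (x + π) = -cos x`,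
over a period `[a, a + 2π]` the integral of `f x * cos x` equals that of
`(f x - f (x + π)) * cos x` over `[a, a + π]`. For antitone `f` the first factor lies in
`[0, f a - f (a + 2π)]`, and `|cos|` integrates to `2` over any half-period, so the period
contributes at most `2 (f a - f (a + 2π))`. These bounds telescope to `2 f 0` on `(0, ∞)`.
-/

open MeasureTheory Real Set Filter Topology

theorem integral_abs_cos_add_pi (a : ℝ) : ∫ x in a..a + π, |cos x| = 2 := by
  have hper : Function.Periodic (fun x => |cos x|) π := fun x => by simp [cos_add_pi]
  rw [hper.intervalIntegral_add_eq a (-(π / 2)), show -(π / 2) + π = π / 2 by ring]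
  calc ∫ x in -(π / 2)..π / 2, |cos x| = ∫ x in -(π / 2)..π / 2, cos x := by
        refine intervalIntegral.integral_congr fun x hx => abs_of_nonneg ?_
        rw [uIcc_of_le (by linarith [pi_pos])] at hx
        exact cos_nonneg_of_mem_Icc hx
    _ = 2 := by simp [integral_cos]; norm_num

theorem AntitoneOn.intervalIntegrable_mul_cos {f : ℝ → ℝ} {a b : ℝ}
    (hf : AntitoneOn f (uIcc a b)) :
    IntervalIntegrable (fun x => f x * cos x) volume a b :=
  hf.intervalIntegrable.mul_continuousOn continuous_cos.continuousOn

theorem integral_mul_cos_two_pi_eq_integral_sub_mul_cos {f : ℝ → ℝ} {a : ℝ}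
    (hf : IntervalIntegrable f volume a (a + 2 * π)) :
    ∫ x in a..a + 2 * π, f x * cos x = ∫ x in a..a + π, (f x - f (x + π)) * cos x := by
  have hπ := pi_pos
  have hfcos := hf.mul_continuousOn continuous_cos.continuousOn
  have hint₁ : IntervalIntegrable (fun x => f x * cos x) volume a (a + π) :=
    hfcos.mono_set <| uIcc_subset_uIcc left_mem_uIcc (mem_uIcc_of_le (by linarith) (by linarith))
  have hint₂ : IntervalIntegrable (fun x => f x * cos x) volume (a + π) (a + π + π) :=
    hfcos.mono_set <| uIcc_subset_uIcc (mem_uIcc_of_le (by linarith) (by linarith))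
      (mem_uIcc_of_le (by linarith) (by linarith))
  have hshift : IntervalIntegrable (fun x => f (x + π) * cos (x + π)) volume a (a + π) := by
    simpa using hint₂.comp_add_right π
  calc ∫ x in a..a + 2 * π, f x * cos x
      = (∫ x in a..a + π, f x * cos x) + ∫ x in a + π..a + π + π, f x * cos x := by
        rw [intervalIntegral.integral_add_adjacent_intervals hint₁ hint₂]; ring_nf
    _ = (∫ x in a..a + π, f x * cos x) + ∫ x in a..a + π, f (x + π) * cos (x + π) := by
        rw [intervalIntegral.integral_comp_add_right (fun x => f x * cos x)]
    _ = ∫ x in a..a + π, (f x - f (x + π)) * cos x := by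
        rw [← intervalIntegral.integral_add hint₁ hshift]
        congr 1; ext x; rw [cos_add_pi]; ring

theorem abs_integral_mul_cos_two_pi_le {f : ℝ → ℝ} {a : ℝ}
    (hf : AntitoneOn f (Icc a (a + 2 * π))) :
    |∫ x in a..a + 2 * π, f x * cos x| ≤ 2 * (f a - f (a + 2 * π)) := by
  have hπ := pi_pos
  have hdrop : ∀ x ∈ Ioc a (a + π), |f x - f (x + π)| ≤ f a - f (a + 2 * π) := fun x hx => by
    have h₁ : f x ≤ f a := hf ⟨le_rfl, by linarith⟩ ⟨hx.1.le, by linarith [hx.2]⟩ hx.1.le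
    have h₂ : f (a + 2 * π) ≤ f (x + π) :=
      hf ⟨by linarith [hx.1], by linarith [hx.2]⟩ ⟨by linarith, le_rfl⟩ (by linarith [hx.2])
    have h₃ : f (x + π) ≤ f x :=
      hf ⟨hx.1.le, by linarith [hx.2]⟩ ⟨by linarith [hx.1], by linarith [hx.2]⟩ (by linarith)
    rw [abs_of_nonneg (by linarith)]; linarith
  have hbound : ∀ᵐ x ∂volume, x ∈ Ioc a (a + π) →
      ‖(f x - f (x + π)) * cos x‖ ≤ (f a - f (a + 2 * π)) * |cos x| :=
    ae_of_all _ fun x hx => by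
      rw [norm_mul, Real.norm_eq_abs, Real.norm_eq_abs]
      exact mul_le_mul_of_nonneg_right (hdrop x hx) (abs_nonneg _)
  calc |∫ x in a..a + 2 * π, f x * cos x|
      = ‖∫ x in a..a + π, (f x - f (x + π)) * cos x‖ := by
        rw [integral_mul_cos_two_pi_eq_integral_sub_mul_cos
          (hf.mono (uIcc_subset_Icc (left_mem_Icc.2 (by linarith))
            (right_mem_Icc.2 (by linarith)))).intervalIntegrable, Real.norm_eq_abs]
    _ ≤ ∫ x in a..a + π, (f a - f (a + 2 * π)) * |cos x| :=
        intervalIntegral.norm_integral_le_of_norm_le (by linarith) hbound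
          (Continuous.intervalIntegrable (by fun_prop) _ _)
    _ = 2 * (f a - f (a + 2 * π)) := by
        rw [intervalIntegral.integral_const_mul, integral_abs_cos_add_pi]; ring

theorem abs_integral_mul_cos_nat_mul_two_pi_le {f : ℝ → ℝ} {a : ℝ} (hf : AntitoneOn f (Ici a))
    (n : ℕ) : |∫ x in a..a + n * (2 * π), f x * cos x| ≤ 2 * (f a - f (a + n * (2 * π))) := by
  induction n with
  | zero => simp
  | succ n ih =>
    have hπ := pi_pos
    set b := a + n * (2 * π)
    have hb : a ≤ b := le_add_of_nonneg_right (by positivity)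
    have hsucc : a + (n + 1 : ℕ) * (2 * π) = b + 2 * π := by push_cast; ring
    have hmono : AntitoneOn f (uIcc a (b + 2 * π)) :=
      hf.mono (by rw [uIcc_of_le (by linarith)]; exact Icc_subset_Ici_self)
    rw [hsucc, ← intervalIntegral.integral_add_adjacent_intervals
      (AntitoneOn.intervalIntegrable_mul_cos (hmono.mono (uIcc_subset_uIcc_left ?_)))
      (AntitoneOn.intervalIntegrable_mul_cos (hmono.mono (uIcc_subset_uIcc_right ?_)))]
    · have hlast := abs_integral_mul_cos_two_pi_le (a := b) (f := f)
        (hf.mono fun x hx => le_trans hb hx.1)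
      linarith [abs_add_le (∫ x in a..b, f x * cos x) (∫ x in b..b + 2 * π, f x * cos x)]
    all_goals exact mem_uIcc_of_le hb (by linarith)

theorem abs_integral_Ioi_mul_cos_le {f : ℝ → ℝ} (hf : IntegrableOn f (Ioi 0))
    (hnonneg : ∀ x, 0 ≤ x → 0 ≤ f x) (hmono : AntitoneOn f (Ici 0)) :
    |∫ x in Ioi 0, f x * cos x| ≤ 2 * f 0 := by
  have hcos : IntegrableOn (fun x => f x * cos x) (Ioi 0) :=
    hf.mul_bdd continuous_cos.aestronglyMeasurable (c := 1)
      (ae_of_all _ fun x => by simpa using abs_cos_le_one x)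
  have hperiods : Tendsto (fun n : ℕ => (n : ℝ) * (2 * π)) atTop atTop :=
    tendsto_natCast_atTop_atTop.atTop_mul_const (by positivity)
  refine le_of_tendsto ((intervalIntegral_tendsto_integral_Ioi 0 hcos hperiods).abs)
    (Eventually.of_forall fun n => ?_)
  have h := abs_integral_mul_cos_nat_mul_two_pi_le hmono n
  rw [zero_add] at h
  linarith [hnonneg (n * (2 * π)) (by positivity)]

theorem abs_integral_mul_cos_le_of_even {f : ℝ → ℝ} (hf : Integrable f)
    (hnonneg : ∀ x, 0 ≤ f x) (heven : ∀ x, f (-x) = f x) (hmono : AntitoneOn f (Ici 0)) :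
    |∫ x, f x * cos x| ≤ 4 * f 0 := by
  have hfold : ∫ x, f x * cos x = 2 * ∫ x in Ioi 0, f x * cos x := by
    rw [← integral_comp_abs (f := fun x => f x * cos x)]
    congr 1 with x
    rcases abs_choice x with h | h <;> simp [h, heven, cos_neg]
  rw [hfold, abs_mul, abs_two]
  linarith [abs_integral_Ioi_mul_cos_le hf.integrableOn (fun x _ => hnonneg x) hmono]

theorem integral_mul_cos_const_mul (f : ℝ → ℝ) {c : ℝ} (hc : c ≠ 0) :
    ∫ x, f x * cos (c * x) = |c|⁻¹ * ∫ y, f (c⁻¹ * y) * cos y := by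
  rw [← abs_inv, ← smul_eq_mul, ← Measure.integral_comp_mul_left]
  simp only [inv_mul_cancel_left₀ hc]

theorem fourier_decay_of_monotone (f : ℝ → ℝ)
    (hf : Integrable f (volume : Measure ℝ))
    (hnonneg : ∀ x : ℝ, 0 ≤ f x)
    (heven : ∀ x : ℝ, f (-x) = f x)
    (hmono : AntitoneOn f (Set.Ici (0 : ℝ)))
    (ξ : ℝ) (hξ : ξ ≠ 0) :
    |∫ x : ℝ, f x * Real.cos (ξ * x)| ≤ 4 * f 0 / |ξ| := by
  have hr : 0 < |ξ| := abs_pos.mpr hξ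
  have hr_inv : 0 ≤ |ξ|⁻¹ := inv_nonneg.2 hr.le
  have hcos : ∀ x, cos (ξ * x) = cos (|ξ| * x) := fun x => by
    rcases abs_choice ξ with h | h <;> simp [h]
  have hscaled : |∫ y, f (|ξ|⁻¹ * y) * cos y| ≤ 4 * f 0 := by
    simpa using abs_integral_mul_cos_le_of_even (hf.comp_mul_left' (inv_ne_zero hr.ne'))
      (fun y => hnonneg _) (fun y => by simp only [mul_neg, heven])
      fun x hx y hy hxy => hmono (mem_Ici.2 (mul_nonneg hr_inv hx))
        (mem_Ici.2 (mul_nonneg hr_inv hy)) (mul_le_mul_of_nonneg_left hxy hr_inv)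
  simp_rw [hcos, integral_mul_cos_const_mul f hr.ne', abs_mul, abs_inv, abs_abs, div_eq_inv_mul]
  exact mul_le_mul_of_nonneg_left hscaled hr_inv
end
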